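/- arXiv:1201.2059 — 6 statements merged into one kernel-verified Lean document; each statement's English description precedes it below -/
import Mathlib

section
/- Let n ≥ 1 and let P be the transition matrix of the simple random walk on the hypercube Σ_n (P(x,y) = 1/n if dist(x,y) = 1 and P(x,y) = 0 otherwise), and set θ_n = 3n². Then for every x, y ∈ Σ_n and every integer i ≥ 0, |2^{-n}·(P^{θ_n+i}(x,y) + P^{θ_n+i+1}(x,y)) − 2·2^{-2n}| ≤ 2^{-3n+1}. -/
open Finset

noncomputable def eps (b : Bool) : ℝ := if b then -1 else 1

lemma eps_mul_self (b : Bool) : eps b * eps b = 1 := by cases b <;> simp [eps]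

lemma abs_eps (b : Bool) : |eps b| = 1 := by cases b <;> simp [eps]

lemma eps_not (b : Bool) : eps (!b) = - eps b := by cases b <;> simp [eps]

noncomputable def chi {n : ℕ} (S : Finset (Fin n)) (x : Fin n → Bool) : ℝ :=
  ∏ i ∈ S, eps (x i)

lemma abs_chi {n : ℕ} (S : Finset (Fin n)) (x : Fin n → Bool) : |chi S x| = 1 := by
  rw [chi, Finset.abs_prod]
  simp [abs_eps]

lemma sum_chi_mul {n : ℕ} (x y : Fin n → Bool) :
    ∑ S : Finset (Fin n), chi S x * chi S y = if x = y then (2:ℝ)^n else 0 := by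
  have h : ∀ S : Finset (Fin n), chi S x * chi S y
      = (∏ i ∈ S, eps (x i) * eps (y i)) * ∏ i ∈ (univ \ S), (1:ℝ) := by
    intro S; rw [chi, chi, ← Finset.prod_mul_distrib]; simp
  simp_rw [h]
  rw [← Finset.powerset_univ, ← Finset.prod_add]
  by_cases hxy : x = y
  · subst hxy
    simp [eps_mul_self]
    norm_num
  · simp only [if_neg hxy]
    obtain ⟨j, hj⟩ : ∃ j, x j ≠ y j := by
      by_contra h'; push_neg at h'; exact hxy (funext h')
    apply Finset.prod_eq_zero (Finset.mem_univ j)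
    revert hj; cases x j <;> cases y j <;> simp [eps]

lemma chi_flip {n : ℕ} (S : Finset (Fin n)) (x : Fin n → Bool) (j : Fin n) :
    chi S (Function.update x j (!(x j))) = (if j ∈ S then -1 else 1) * chi S x := by
  by_cases hj : j ∈ S
  · rw [if_pos hj, chi, chi, ← Finset.mul_prod_erase _ _ hj, ← Finset.mul_prod_erase _ _ hj]
    rw [Function.update_self, eps_not]
    have : ∀ i ∈ S.erase j, eps (Function.update x j (!(x j)) i) = eps (x i) := by
      intro i hi
      rw [Function.update_of_ne (Finset.ne_of_mem_erase hi)]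
    rw [Finset.prod_congr rfl this]; ring
  · rw [if_neg hj, one_mul, chi, chi]
    apply Finset.prod_congr rfl
    intro i hi
    have : i ≠ j := fun h => hj (h ▸ hi)
    rw [Function.update_of_ne this]

lemma hamming_one {n : ℕ} (x y : Fin n → Bool) :
    hammingDist x y = 1 ↔ ∃ j, y = Function.update x j (!(x j)) := by
  rw [hammingDist, Finset.card_eq_one]
  constructor
  · rintro ⟨j, hj⟩
    refine ⟨j, funext fun i => ?_⟩
    by_cases hij : i = j
    · subst hij
      have : i ∈ ({i} : Finset (Fin n)) := Finset.mem_singleton_self i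
      rw [← hj, Finset.mem_filter] at this
      rw [Function.update_self]
      revert this; cases x i <;> cases y i <;> simp
    · have : i ∉ ({j} : Finset (Fin n)) := by simp [hij]
      rw [← hj, Finset.mem_filter] at this
      push_neg at this
      rw [Function.update_of_ne hij]
      exact (this (Finset.mem_univ i)).symm
  · rintro ⟨j, rfl⟩
    refine ⟨j, ?_⟩
    ext i
    simp only [Finset.mem_filter, Finset.mem_univ, true_and, Finset.mem_singleton]
    by_cases hij : i = j
    · subst hij; rw [Function.update_self]; cases x i <;> simp
    · rw [Function.update_of_ne hij]; simp [hij]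

lemma flip_inj {n : ℕ} (x : Fin n → Bool) :
    Function.Injective (fun j => Function.update x j (!(x j))) := by
  intro j k h
  by_contra hjk
  have h2 := congrFun h j
  simp only [] at h2
  rw [Function.update_of_ne hjk] at h2
  exact (Bool.not_ne_self (x j)).symm (by simpa using h2.symm)

lemma sum_P_chi {n : ℕ} (hn : 1 ≤ n) (P : Matrix (Fin n → Bool) (Fin n → Bool) ℝ)
    (hP : ∀ x y, P x y = if hammingDist x y = 1 then (n : ℝ)⁻¹ else 0)
    (S : Finset (Fin n)) (x : Fin n → Bool) :
    ∑ y, P x y * chi S y = (1 - 2 * S.card / n) * chi S x := by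
  have hfilter : Finset.univ.filter (fun y => hammingDist x y = 1)
      = Finset.univ.image (fun j => Function.update x j (!(x j))) := by
    ext y
    simp only [Finset.mem_filter, Finset.mem_univ, true_and, Finset.mem_image]
    rw [hamming_one]
    constructor
    · rintro ⟨j, hj⟩; exact ⟨j, hj.symm⟩
    · rintro ⟨j, hj⟩; exact ⟨j, hj.symm⟩
  simp_rw [hP]
  simp_rw [ite_mul, zero_mul]
  rw [Finset.sum_ite, Finset.sum_const_zero, add_zero, hfilter,
    Finset.sum_image (fun a _ b _ h => flip_inj x h)]
  simp_rw [chi_flip]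
  have hsum : ∑ j : Fin n, (if j ∈ S then (-1:ℝ) else 1) = n - 2 * S.card := by
    have : ∀ j : Fin n, (if j ∈ S then (-1:ℝ) else 1)
        = 1 - 2 * (if j ∈ S then (1:ℝ) else 0) := by
      intro j; by_cases h : j ∈ S <;> simp [h] <;> norm_num
    rw [Finset.sum_congr rfl (fun j _ => this j)]
    rw [Finset.sum_sub_distrib, ← Finset.mul_sum]
    simp [Finset.sum_boole, Finset.filter_mem_eq_inter]
  rw [← Finset.mul_sum, ← Finset.sum_mul, hsum]
  have hn0 : (n:ℝ) ≠ 0 := Nat.cast_ne_zero.mpr (by omega)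
  field_simp

lemma pow_apply_eq {n : ℕ} (hn : 1 ≤ n) (P : Matrix (Fin n → Bool) (Fin n → Bool) ℝ)
    (hP : ∀ x y, P x y = if hammingDist x y = 1 then (n : ℝ)⁻¹ else 0)
    (m : ℕ) (x y : Fin n → Bool) :
    (P ^ m) x y = ((2:ℝ)^n)⁻¹ *
      ∑ S : Finset (Fin n), (1 - 2 * S.card / n)^m * (chi S x * chi S y) := by
  induction m generalizing x y with
  | zero =>
    simp only [pow_zero, one_mul]
    rw [Matrix.one_apply, sum_chi_mul]
    by_cases hxy : x = y <;> simp [hxy]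
  | succ m ih =>
    rw [pow_succ', Matrix.mul_apply]
    simp_rw [ih, Finset.mul_sum]
    rw [Finset.sum_comm]
    congr 1
    ext S
    have : ∑ z, P x z * (((2:ℝ)^n)⁻¹ * ((1 - 2 * S.card / n)^m * (chi S z * chi S y)))
        = ((2:ℝ)^n)⁻¹ * ((1 - 2 * S.card / n)^m * chi S y) * ∑ z, P x z * chi S z := by
      rw [Finset.mul_sum]; congr 1; ext z; ring
    rw [this, sum_P_chi hn P hP]
    ring

lemma term_bound {n : ℕ} (hn : 1 ≤ n) (m : ℕ) (hm : 3 * n ^ 2 ≤ m)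
    (k : ℕ) (hk1 : 1 ≤ k) (hkn : k ≤ n) :
    |(1 - 2 * (k:ℝ) / n) ^ m * (1 + (1 - 2 * (k:ℝ) / n))| ≤ 2 * ((4:ℝ) ^ n)⁻¹ := by
  have hnpos : (0:ℝ) < n := by exact_mod_cast Nat.pos_of_ne_zero (by omega)
  have hne : (n:ℝ) ≠ 0 := ne_of_gt hnpos
  rcases eq_or_lt_of_le hkn with h | h
  · have : 2 * (k:ℝ) / n = 2 := by rw [h]; field_simp
    rw [this]
    norm_num
  · have hn2 : 2 ≤ n := by omega
    have hk1' : (1:ℝ) ≤ k := by exact_mod_cast hk1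
    have hkn' : (k:ℝ) ≤ (n:ℝ) - 1 := by
      have : (k:ℝ) + 1 ≤ n := by exact_mod_cast Nat.succ_le_of_lt h
      linarith
    have hinv : 0 < (n:ℝ)⁻¹ := inv_pos.mpr hnpos
    have hcancel : (n:ℝ) * (n:ℝ)⁻¹ = 1 := mul_inv_cancel₀ hne
    set a : ℝ := 1 - 2 / n with ha_def
    have ha0 : 0 ≤ a := by
      rw [ha_def, sub_nonneg, div_le_one hnpos]
      exact_mod_cast hn2
    have ha1 : a ≤ 1 := by
      rw [ha_def]
      have : 0 ≤ 2 / (n:ℝ) := by positivity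
      linarith
    have e : 2 * (k:ℝ) / n = 2 * k * (n:ℝ)⁻¹ := by rw [div_eq_mul_inv]
    have e2 : 2 / (n:ℝ) = 2 * (n:ℝ)⁻¹ := by rw [div_eq_mul_inv]
    have habs : |1 - 2 * (k:ℝ) / n| ≤ a := by
      rw [abs_le, ha_def, e, e2]
      constructor
      · nlinarith [mul_le_mul_of_nonneg_right hkn' (le_of_lt hinv)]
      · nlinarith [mul_le_mul_of_nonneg_right hk1' (le_of_lt hinv)]
    have h3 : a ^ (3 * n) ≤ (4:ℝ)⁻¹ := by
      have hexp : a ≤ Real.exp (-2 / n) := by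
        have := Real.add_one_le_exp (-2 / (n:ℝ))
        rw [ha_def]
        have : -2 / (n:ℝ) = -(2 / n) := by ring
        linarith [Real.add_one_le_exp (-2 / (n:ℝ))]
      calc a ^ (3 * n) ≤ (Real.exp (-2 / n)) ^ (3 * n) := pow_le_pow_left₀ ha0 hexp _
        _ = Real.exp (((3 * n : ℕ) : ℝ) * (-2 / n)) := by rw [Real.exp_nat_mul]
        _ = Real.exp (-6) := by
            congr 1
            push_cast
            field_simp
            ring
        _ ≤ (4:ℝ)⁻¹ := by
            rw [Real.exp_neg]
            have h7 : (7:ℝ) ≤ Real.exp 6 := by linarith [Real.add_one_le_exp (6:ℝ)]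
            exact inv_anti₀ (by norm_num) (by linarith)
    calc |(1 - 2 * (k:ℝ) / n) ^ m * (1 + (1 - 2 * (k:ℝ) / n))|
        = |1 - 2 * (k:ℝ) / n| ^ m * |1 + (1 - 2 * (k:ℝ) / n)| := by
          rw [abs_mul, abs_pow]
      _ ≤ ((4:ℝ) ^ n)⁻¹ * 2 := by
          apply mul_le_mul ?_ ?_ (abs_nonneg _) (by positivity)
          · calc |1 - 2 * (k:ℝ) / n| ^ m ≤ a ^ m := pow_le_pow_left₀ (abs_nonneg _) habs m
              _ ≤ a ^ (3 * n ^ 2) := pow_le_pow_of_le_one ha0 ha1 hm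
              _ = (a ^ (3 * n)) ^ n := by rw [← pow_mul]; ring_nf
              _ ≤ ((4:ℝ)⁻¹) ^ n := pow_le_pow_left₀ (pow_nonneg ha0 _) h3 n
              _ = ((4:ℝ) ^ n)⁻¹ := by rw [inv_pow]
          · rw [abs_le, e]
            have h1 : 0 ≤ 2 * (k:ℝ) * (n:ℝ)⁻¹ := by positivity
            have h2 : 2 * (k:ℝ) * (n:ℝ)⁻¹ ≤ 2 := by
              have hkn'' : (k:ℝ) ≤ n := by exact_mod_cast hkn
              nlinarith [mul_le_mul_of_nonneg_right hkn'' (le_of_lt hinv)]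
            constructor <;> linarith
      _ = 2 * ((4:ℝ) ^ n)⁻¹ := mul_comm _ _

/-- Mixing estimate for the simple random walk on the hypercube `Σ_n = {−1,1}^n`
(encoded as `Fin n → Bool` with the Hamming distance): with `P` the transition matrix
(`P x y = 1/n` if `dist(x,y) = 1`, else `0`) and `θ_n = 3n²`, for all `x, y` and `i ≥ 0`,
`|2^{-n}(P^{θ_n+i}(x,y) + P^{θ_n+i+1}(x,y)) − 2·2^{-2n}| ≤ 2^{-3n+1}`. -/
theorem hypercube_srw_mixing (n : ℕ) (hn : 1 ≤ n)
    (P : Matrix (Fin n → Bool) (Fin n → Bool) ℝ)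
    (hP : ∀ x y, P x y = if hammingDist x y = 1 then (n : ℝ)⁻¹ else 0)
    (x y : Fin n → Bool) (i : ℕ) :
    |((2 : ℝ) ^ n)⁻¹ * ((P ^ (3 * n ^ 2 + i)) x y + (P ^ (3 * n ^ 2 + i + 1)) x y)
        - 2 * ((2 : ℝ) ^ (2 * n))⁻¹|
      ≤ 2 * ((2 : ℝ) ^ (3 * n))⁻¹ := by
  set m := 3 * n ^ 2 + i with hm_def
  rw [pow_apply_eq hn P hP m x y, pow_apply_eq hn P hP (m + 1) x y]
  set f : Finset (Fin n) → ℝ := fun S =>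
    (1 - 2 * (S.card : ℝ) / n) ^ m * (1 + (1 - 2 * (S.card : ℝ) / n)) * (chi S x * chi S y)
    with hf_def
  set T : ℝ := ∑ S ∈ Finset.univ.erase (∅ : Finset (Fin n)), f S with hT_def
  have hc2 : ((2:ℝ)^n)⁻¹ * ((2:ℝ)^n)⁻¹ = ((2:ℝ)^(2*n))⁻¹ := by
    rw [← mul_inv, ← pow_add, two_mul]
  have hsum : (∑ S : Finset (Fin n), (1 - 2 * (S.card:ℝ) / n) ^ m * (chi S x * chi S y))
      + ∑ S : Finset (Fin n), (1 - 2 * (S.card:ℝ) / n) ^ (m + 1) * (chi S x * chi S y)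
      = 2 + T := by
    rw [← Finset.sum_add_distrib]
    have hpt : ∀ S : Finset (Fin n),
        (1 - 2 * (S.card:ℝ) / n) ^ m * (chi S x * chi S y)
        + (1 - 2 * (S.card:ℝ) / n) ^ (m + 1) * (chi S x * chi S y) = f S := by
      intro S; rw [hf_def]; ring
    rw [Finset.sum_congr rfl (fun S _ => hpt S),
      ← Finset.add_sum_erase _ f (Finset.mem_univ ∅), ← hT_def]
    congr 1
    rw [hf_def]
    simp [chi]
    norm_num
  have key : ∀ A B : ℝ, A + B = 2 + T →
      ((2:ℝ)^n)⁻¹ * (((2:ℝ)^n)⁻¹ * A + ((2:ℝ)^n)⁻¹ * B) - 2 * ((2:ℝ)^(2*n))⁻¹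
      = ((2:ℝ)^(2*n))⁻¹ * T := by
    intro A B hAB
    have h1 : ((2:ℝ)^n)⁻¹ * (((2:ℝ)^n)⁻¹ * A + ((2:ℝ)^n)⁻¹ * B)
        = ((2:ℝ)^n)⁻¹ * ((2:ℝ)^n)⁻¹ * (A + B) := by ring
    rw [h1, hAB, hc2]
    ring
  rw [key _ _ hsum, abs_mul,
    abs_of_pos (show (0:ℝ) < ((2:ℝ)^(2*n))⁻¹ by positivity)]
  have hbound : ∀ S ∈ Finset.univ.erase (∅ : Finset (Fin n)),
      |f S| ≤ 2 * ((4:ℝ)^n)⁻¹ := by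
    intro S hS
    have hS0 : S ≠ ∅ := Finset.ne_of_mem_erase hS
    have hk1 : 1 ≤ S.card := Finset.card_pos.mpr (Finset.nonempty_iff_ne_empty.mpr hS0)
    have hkn : S.card ≤ n := by
      have := Finset.card_le_univ S
      simpa using this
    rw [hf_def]
    have habs : |(1 - 2 * (S.card:ℝ) / n) ^ m * (1 + (1 - 2 * (S.card:ℝ) / n))
        * (chi S x * chi S y)|
        = |(1 - 2 * (S.card:ℝ) / n) ^ m * (1 + (1 - 2 * (S.card:ℝ) / n))| := by
      rw [abs_mul, abs_mul (chi S x), abs_chi, abs_chi]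
      norm_num
    rw [habs]
    exact term_bound hn m (Nat.le_add_right _ _) S.card hk1 hkn
  have hT : |T| ≤ (2:ℝ)^n * (2 * ((4:ℝ)^n)⁻¹) := by
    calc |T| ≤ ∑ S ∈ Finset.univ.erase (∅ : Finset (Fin n)), |f S| :=
          Finset.abs_sum_le_sum_abs _ _
      _ ≤ (Finset.univ.erase (∅ : Finset (Fin n))).card • (2 * ((4:ℝ)^n)⁻¹) :=
          Finset.sum_le_card_nsmul _ _ _ hbound
      _ = ((Finset.univ.erase (∅ : Finset (Fin n))).card : ℝ) * (2 * ((4:ℝ)^n)⁻¹) :=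
          nsmul_eq_mul _ _
      _ ≤ (2:ℝ)^n * (2 * ((4:ℝ)^n)⁻¹) := by
          apply mul_le_mul_of_nonneg_right ?_ (by positivity)
          calc ((Finset.univ.erase (∅ : Finset (Fin n))).card : ℝ)
              ≤ ((Finset.univ : Finset (Finset (Fin n))).card : ℝ) := by
                exact_mod_cast Finset.card_le_card (Finset.erase_subset _ _)
            _ = (2:ℝ)^n := by
                rw [Finset.card_univ, Fintype.card_finset, Fintype.card_fin]
                push_cast
                ring
  calc ((2:ℝ)^(2*n))⁻¹ * |T| ≤ ((2:ℝ)^(2*n))⁻¹ * ((2:ℝ)^n * (2 * ((4:ℝ)^n)⁻¹)) :=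
        mul_le_mul_of_nonneg_left hT (by positivity)
    _ = 2 * ((2:ℝ)^(3*n))⁻¹ := by
        have h4 : (4:ℝ)^n = (2:ℝ)^n * (2:ℝ)^n := by
          rw [show (4:ℝ) = 2 * 2 by norm_num, mul_pow]
        have h2n : (2:ℝ)^(2*n) = (2:ℝ)^n * (2:ℝ)^n := by rw [two_mul, pow_add]
        have h3n : (2:ℝ)^(3*n) = (2:ℝ)^n * (2:ℝ)^n * (2:ℝ)^n := by
          rw [show 3*n = n + n + n by ring, pow_add, pow_add]
        rw [h4, h2n, h3n]
        have hp : (0:ℝ) < (2:ℝ)^n := by positivity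
        field_simp
end

section
/- Fix an integer p ≥ 2 and c ∈ (0,1/2), and let γ_n, β_n, α_n, a_n, c_n be as in the standing setup. For δ > 0 let Y_n(δ) = a_n·(c_n δ^{β_n/γ_n})^{-1}·Σ_{x∈Σ_n} 2^{-n}·E[e^{β_n H_n(x)}·e·𝟙{e^{β_n H_n(x)}·e ≤ c_n δ^{β_n/γ_n}} | H_n], where e is a mean-one exponential random variable independent of the environment. Then ℙ-almost surely, for every δ > 0, limsup_{n→∞} (Y_n(δ))^{α_n} < ∞. -/
open MeasureTheory ProbabilityTheory Filter Real Finset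

/-- Configuration space: the hypercube `Σ_n = {−1,1}^n`, encoded as `Fin n → Bool`,
with the Hamming distance as graph distance. -/
abbrev V (n : ℕ) := Fin n → Bool

/-- Overlap `R_n(x,x') = 1 − 2·dist(x,x')/n`. -/
noncomputable def overlap (n : ℕ) (x y : V n) : ℝ := 1 - 2 * (hammingDist x y : ℝ) / n

/-- `γ_n = n^{-c}`. -/
noncomputable def γseq (c : ℝ) (n : ℕ) : ℝ := (n : ℝ) ^ (-c)

/-- Block length `θ_n = 3n²`. -/
def θseq (n : ℕ) : ℕ := 3 * n ^ 2

/-- Jump scale `a_n = √(2πn)·γ_n⁻¹·e^{γ_n²n/2}`. -/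
noncomputable def aseq (c : ℝ) (n : ℕ) : ℝ :=
  Real.sqrt (2 * π * n) * (γseq c n)⁻¹ * Real.exp ((γseq c n) ^ 2 * n / 2)

/-- Time scale `c_n = e^{γ_nβ_n n}`. -/
noncomputable def cseq (c : ℝ) (β : ℕ → ℝ) (n : ℕ) : ℝ := Real.exp (γseq c n * β n * n)

/-- `k_n(t) = ⌊⌊a_n t⌋/θ_n⌋`. -/
noncomputable def kseq (c : ℝ) (n : ℕ) (t : ℝ) : ℕ := ⌊aseq c n * t⌋₊ / θseq n

/-- `X` is a centered Gaussian random vector with covariance `Δ`: every linear combination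
of its coordinates is a centered real Gaussian with the corresponding variance. -/
def IsCenteredGaussianVector {Ω : Type*} [MeasurableSpace Ω] (P : Measure Ω)
    {I : Type*} [Fintype I] (X : I → Ω → ℝ) (Δ : I → I → ℝ) : Prop :=
  ∀ c : I → ℝ, Measure.map (fun ω => ∑ i, c i * X i ω) P =
    gaussianReal 0 (Real.toNNReal (∑ i, ∑ j, c i * c j * Δ i j))

open scoped NNReal ENNReal

lemma gauss_mgf_aux (t : ℝ) {v : ℝ≥0} (hv : v ≠ 0) :
    (Integrable (fun x => rexp (t * x)) (gaussianReal 0 v)) ∧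
    ∫ x, rexp (t * x) ∂(gaussianReal 0 v) = rexp ((v : ℝ) * t ^ 2 / 2) := by
  have hv0 : (0:ℝ) < (v:ℝ) := by
    cases' (show (0:ℝ≥0) ≤ v by positivity).lt_or_eq with h h
    · exact_mod_cast h
    · exact absurd h.symm hv
  have hb : (0:ℝ) < (2 * (v:ℝ))⁻¹ := by positivity
  have hs : (0:ℝ) < Real.sqrt (2 * π * v) := Real.sqrt_pos.2 (by positivity)
  have key : (fun x => gaussianPDFReal 0 v x * rexp (t * x))
      = fun x => rexp ((v:ℝ) * t ^ 2 / 2) *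
        ((Real.sqrt (2 * π * v))⁻¹ * rexp (-(2 * (v:ℝ))⁻¹ * (x - (v:ℝ) * t) ^ 2)) := by
    funext x
    have hexp : -(x - 0) ^ 2 / (2 * (v:ℝ)) + t * x
        = (v:ℝ) * t ^ 2 / 2 + -(2 * (v:ℝ))⁻¹ * (x - (v:ℝ) * t) ^ 2 := by
      field_simp
      ring
    rw [gaussianPDFReal, mul_assoc, ← Real.exp_add, hexp, Real.exp_add]
    ring
  have hint : Integrable (fun x => gaussianPDFReal 0 v x * rexp (t * x)) := by
    rw [key]
    have : Integrable (fun x : ℝ => (Real.sqrt (2 * π * v))⁻¹ *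
        rexp (-(2 * (v:ℝ))⁻¹ * x ^ 2)) := (integrable_exp_neg_mul_sq hb).const_mul _
    exact ((this.comp_sub_right ((v:ℝ) * t)).const_mul _)
  have hmap : gaussianReal 0 v = volume.withDensity
      (fun x => ((gaussianPDFReal 0 v x).toNNReal : ℝ≥0∞)) := by
    rw [gaussianReal_of_var_ne_zero _ hv]
    rfl
  have hmeas : Measurable fun x => (gaussianPDFReal 0 v x).toNNReal :=
    (measurable_gaussianPDFReal 0 v).real_toNNReal
  have hsmul : ∀ g : ℝ → ℝ, (fun x => (gaussianPDFReal 0 v x).toNNReal • g x)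
      = fun x => gaussianPDFReal 0 v x * g x := by
    intro g; funext x
    rw [NNReal.smul_def, smul_eq_mul, Real.coe_toNNReal _ (gaussianPDFReal_nonneg 0 v x)]
  constructor
  · rw [hmap, integrable_withDensity_iff_integrable_smul hmeas, hsmul]
    exact hint
  · rw [hmap, integral_withDensity_eq_integral_smul hmeas]
    rw [show (fun x => (gaussianPDFReal 0 v x).toNNReal • rexp (t * x))
        = fun x => gaussianPDFReal 0 v x * rexp (t * x) from hsmul _, key]
    rw [integral_const_mul, integral_const_mul]
    rw [integral_sub_right_eq_self (fun a => rexp (-(2 * (v:ℝ))⁻¹ * a ^ 2)) ((v:ℝ) * t)]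
    rw [integral_gaussian]
    rw [show π / (2 * (v:ℝ))⁻¹ = 2 * π * v by field_simp]
    rw [inv_mul_cancel₀ (ne_of_gt hs), mul_one]

lemma map_H {Ω : Type*} [MeasurableSpace Ω] {Pe : Measure Ω} {n p : ℕ}
    {Hn : V n → Ω → ℝ}
    (hH : IsCenteredGaussianVector Pe Hn (fun x y => (n : ℝ) * overlap n x y ^ p))
    (x : V n) : Measure.map (Hn x) Pe = gaussianReal 0 (n : ℝ≥0) := by
  have h := hH (fun y => if y = x then 1 else 0)
  have h1 : (fun ω => ∑ i, (if i = x then (1:ℝ) else 0) * Hn i ω) = Hn x := by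
    funext ω
    simp [ite_mul]
  have h2 : (∑ i, ∑ j, (if i = x then (1:ℝ) else 0) * (if j = x then (1:ℝ) else 0) *
      ((n : ℝ) * overlap n i j ^ p)) = (n : ℝ) := by
    have : ∀ i : V n, (∑ j, (if i = x then (1:ℝ) else 0) * (if j = x then (1:ℝ) else 0) *
        ((n : ℝ) * overlap n i j ^ p)) = if i = x then (n : ℝ) * overlap n i x ^ p else 0 := by
      intro i
      by_cases hi : i = x <;> simp [hi, ite_mul, mul_ite]
    rw [Finset.sum_congr rfl (fun i _ => this i)]
    simp [overlap]
  rw [h1, h2] at h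
  rw [h]
  congr 1
  simp

section ExpVar
variable {Ω' : Type*} [MeasurableSpace Ω'] (Pw : Measure Ω') [IsProbabilityMeasure Pw]
  (e : Ω' → ℝ)

lemma exp_var_nonneg (hemeas : Measurable e)
    (he : ∀ y : ℝ, 0 ≤ y → Pw {ω' | y < e ω'} = ENNReal.ofReal (Real.exp (-y))) :
    ∀ᵐ ω' ∂Pw, 0 < e ω' := by
  have h0 : Pw {ω' | 0 < e ω'} = 1 := by
    rw [he 0 le_rfl]; simp
  rw [ae_iff]
  have hset : {ω' | ¬ 0 < e ω'} = {ω' | 0 < e ω'}ᶜ := rfl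
  have hms : MeasurableSet {ω' | 0 < e ω'} := measurableSet_lt measurable_const hemeas
  rw [hset, measure_compl hms (measure_ne_top _ _), h0, measure_univ, tsub_self]

lemma exp_var_lintegral (hemeas : Measurable e)
    (he : ∀ y : ℝ, 0 ≤ y → Pw {ω' | y < e ω'} = ENNReal.ofReal (Real.exp (-y))) :
    ∫⁻ ω', ENNReal.ofReal (e ω') ∂Pw = 1 := by
  rw [lintegral_eq_lintegral_meas_lt Pw
    ((exp_var_nonneg Pw e hemeas he).mono fun _ h => h.le) hemeas.aemeasurable]
  have : ∀ t ∈ Set.Ioi (0:ℝ), Pw {a | t < e a} = ENNReal.ofReal (Real.exp (-t)) :=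
    fun t ht => he t (le_of_lt ht)
  rw [setLIntegral_congr_fun measurableSet_Ioi this]
  have hint : IntegrableOn (fun t : ℝ => Real.exp (-t)) (Set.Ioi 0) := by
    have := exp_neg_integrableOn_Ioi 0 (one_pos)
    simpa using this
  rw [← ofReal_integral_eq_lintegral_ofReal hint
    (Filter.Eventually.of_forall fun t => (Real.exp_pos _).le)]
  rw [integral_exp_neg_Ioi_zero]
  simp

lemma exp_var_integrable (hemeas : Measurable e)
    (he : ∀ y : ℝ, 0 ≤ y → Pw {ω' | y < e ω'} = ENNReal.ofReal (Real.exp (-y))) :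
    Integrable e Pw := by
  refine ⟨hemeas.aestronglyMeasurable, ?_⟩
  rw [hasFiniteIntegral_iff_norm]
  have : ∫⁻ ω', ENNReal.ofReal ‖e ω'‖ ∂Pw = ∫⁻ ω', ENNReal.ofReal (e ω') ∂Pw := by
    refine lintegral_congr_ae ?_
    filter_upwards [exp_var_nonneg Pw e hemeas he] with ω' h
    rw [Real.norm_eq_abs, abs_of_pos h]
  rw [this, exp_var_lintegral Pw e hemeas he]
  exact ENNReal.one_lt_top

lemma exp_var_mean (hemeas : Measurable e)
    (he : ∀ y : ℝ, 0 ≤ y → Pw {ω' | y < e ω'} = ENNReal.ofReal (Real.exp (-y))) :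
    ∫ ω', e ω' ∂Pw = 1 := by
  rw [integral_eq_lintegral_of_nonneg_ae
    ((exp_var_nonneg Pw e hemeas he).mono fun _ h => h.le) hemeas.aestronglyMeasurable,
    exp_var_lintegral Pw e hemeas he]
  simp

lemma trunc_integral_le (hemeas : Measurable e)
    (he : ∀ y : ℝ, 0 ≤ y → Pw {ω' | y < e ω'} = ENNReal.ofReal (Real.exp (-y)))
    {X K : ℝ} (hX : 0 < X) (hK : 0 < K) :
    ∫ ω', Set.indicator {ω'' | X * e ω'' ≤ K} (fun ω'' => X * e ω'') ω' ∂Pw ≤ min K X := by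
  have hnn : ∀ᵐ ω' ∂Pw, 0 ≤ Set.indicator {ω'' | X * e ω'' ≤ K}
      (fun ω'' => X * e ω'') ω' := by
    filter_upwards [exp_var_nonneg Pw e hemeas he] with ω' h
    exact Set.indicator_apply_nonneg fun _ => mul_nonneg hX.le h.le
  refine le_min ?_ ?_
  · calc ∫ ω', Set.indicator {ω'' | X * e ω'' ≤ K} (fun ω'' => X * e ω'') ω' ∂Pw
        ≤ ∫ _ω', K ∂Pw := by
          refine integral_mono_of_nonneg hnn (integrable_const K) ?_
          refine Filter.Eventually.of_forall fun ω' => ?_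
          refine Set.indicator_apply_le' (fun h => h) (fun _ => hK.le)
      _ = K := by simp
  · calc ∫ ω', Set.indicator {ω'' | X * e ω'' ≤ K} (fun ω'' => X * e ω'') ω' ∂Pw
        ≤ ∫ ω', X * e ω' ∂Pw := by
          refine integral_mono_of_nonneg hnn
            ((exp_var_integrable Pw e hemeas he).const_mul X) ?_
          filter_upwards [exp_var_nonneg Pw e hemeas he] with ω' h
          refine Set.indicator_apply_le' (fun _ => le_rfl)
            (fun _ => mul_nonneg hX.le h.le)
      _ = X := by rw [integral_const_mul, exp_var_mean Pw e hemeas he, mul_one]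

end ExpVar

lemma min_le_rpow_mul {K X l : ℝ} (hK : 0 < K) (hX : 0 < X) (hl0 : 0 ≤ l) (hl1 : l ≤ 1) :
    min K X ≤ K ^ (1 - l) * X ^ l := by
  have hm : 0 < min K X := lt_min hK hX
  calc min K X = (min K X) ^ ((1 - l) + l) := by rw [sub_add_cancel, Real.rpow_one]
    _ = (min K X) ^ (1 - l) * (min K X) ^ l := Real.rpow_add hm _ _
    _ ≤ K ^ (1 - l) * X ^ l :=
        mul_le_mul (Real.rpow_le_rpow hm.le (min_le_left _ _) (by linarith))
          (Real.rpow_le_rpow hm.le (min_le_right _ _) hl0)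
          (Real.rpow_nonneg hm.le _) (Real.rpow_nonneg hK.le _)

lemma one_le_Mbound {c : ℝ} (hc0 : 0 < c) {n : ℕ} (hn : 1 ≤ n) :
    1 ≤ Real.sqrt (2 * π * n) * (γseq c n)⁻¹ * (n : ℝ) ^ 2 := by
  have hn1 : (1:ℝ) ≤ n := by exact_mod_cast hn
  have h1 : (1:ℝ) ≤ Real.sqrt (2 * π * n) := by
    rw [Real.one_le_sqrt]
    nlinarith [Real.pi_gt_three]
  have h2 : (1:ℝ) ≤ (γseq c n)⁻¹ := by
    refine (one_le_inv₀ (Real.rpow_pos_of_pos (by linarith) _)).2 ?_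
    exact Real.rpow_le_one_of_one_le_of_nonpos hn1 (by linarith)
  have h3 : (1:ℝ) ≤ (n:ℝ)^2 := by nlinarith
  have h12 : (1:ℝ) ≤ Real.sqrt (2 * π * n) * (γseq c n)⁻¹ := by nlinarith
  nlinarith

lemma tendsto_γ_log {c : ℝ} (hc0 : 0 < c) (hc1 : c < 1/2) (A : ℝ) :
    Filter.Tendsto (fun n : ℕ => γseq c n *
      (Real.log (Real.sqrt (2 * π * n) * (γseq c n)⁻¹ * (n : ℝ) ^ 2) + A))
      Filter.atTop (nhds 0) := by
  have hγ0 : Filter.Tendsto (fun n : ℕ => γseq c n) Filter.atTop (nhds 0) :=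
    (tendsto_rpow_neg_atTop hc0).comp tendsto_natCast_atTop_atTop
  have hA : Filter.Tendsto (fun n : ℕ => γseq c n * A) Filter.atTop (nhds 0) := by
    simpa using hγ0.mul_const A
  have hup : Filter.Tendsto (fun n : ℕ => 4 * (Real.log n / (n:ℝ) ^ c))
      Filter.atTop (nhds 0) := by
    have h1 := (isLittleO_log_rpow_atTop hc0).tendsto_div_nhds_zero
    have h2 := h1.comp tendsto_natCast_atTop_atTop
    simpa using h2.const_mul (4:ℝ)
  have hlog : Filter.Tendsto (fun n : ℕ => γseq c n *
      Real.log (Real.sqrt (2 * π * n) * (γseq c n)⁻¹ * (n : ℝ) ^ 2))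
      Filter.atTop (nhds 0) := by
    refine tendsto_of_tendsto_of_tendsto_of_le_of_le' tendsto_const_nhds hup ?_ ?_
    · filter_upwards [Filter.eventually_ge_atTop 1] with n hn
      exact mul_nonneg (Real.rpow_nonneg (Nat.cast_nonneg n) _)
        (Real.log_nonneg (one_le_Mbound hc0 hn))
    · filter_upwards [Filter.eventually_ge_atTop 7] with n hn
      have hn1' : 1 ≤ n := le_trans (by norm_num) hn
      have hn1 : (1:ℝ) ≤ n := by exact_mod_cast hn1'
      have hn7 : (7:ℝ) ≤ n := by exact_mod_cast hn
      have hnpos : (0:ℝ) < n := by linarith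
      have hM1 : 1 ≤ Real.sqrt (2 * π * n) * (γseq c n)⁻¹ * (n : ℝ) ^ 2 :=
        one_le_Mbound hc0 hn1'
      have hs : Real.sqrt (2 * π * n) ≤ n := by
        have h' : Real.sqrt (2 * π * (n:ℝ)) ≤ Real.sqrt ((n:ℝ)^2) :=
          Real.sqrt_le_sqrt (by nlinarith [Real.pi_lt_d2, mul_nonneg (sub_nonneg.2 hn7) hnpos.le])
        rwa [Real.sqrt_sq hnpos.le] at h'
      have hg : (γseq c n)⁻¹ ≤ n := by
        rw [γseq, Real.rpow_neg (Nat.cast_nonneg n), inv_inv]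
        calc (n:ℝ) ^ c ≤ (n:ℝ) ^ (1:ℝ) :=
              Real.rpow_le_rpow_of_exponent_le hn1 (by linarith)
          _ = n := Real.rpow_one _
      have hγinv_nonneg : (0:ℝ) ≤ (γseq c n)⁻¹ := by
        rw [γseq]; positivity
      have hMle : Real.sqrt (2 * π * n) * (γseq c n)⁻¹ * (n : ℝ) ^ 2 ≤ (n:ℝ) ^ (4:ℕ) := by
        calc Real.sqrt (2 * π * n) * (γseq c n)⁻¹ * (n : ℝ) ^ 2
            ≤ (n:ℝ) * (n:ℝ) * (n:ℝ)^2 :=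
              mul_le_mul (mul_le_mul hs hg hγinv_nonneg hnpos.le) le_rfl
                (by positivity) (by positivity)
          _ = (n:ℝ)^(4:ℕ) := by ring
      have hlogM : Real.log (Real.sqrt (2 * π * n) * (γseq c n)⁻¹ * (n : ℝ) ^ 2)
          ≤ 4 * Real.log n := by
        calc Real.log (Real.sqrt (2 * π * n) * (γseq c n)⁻¹ * (n : ℝ) ^ 2)
            ≤ Real.log ((n:ℝ)^(4:ℕ)) := Real.log_le_log (by linarith) hMle
          _ = 4 * Real.log n := by rw [Real.log_pow]; norm_num
      calc γseq c n * Real.log (Real.sqrt (2 * π * n) * (γseq c n)⁻¹ * (n : ℝ) ^ 2)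
          ≤ γseq c n * (4 * Real.log n) :=
            mul_le_mul_of_nonneg_left hlogM (Real.rpow_nonneg (Nat.cast_nonneg n) _)
        _ = 4 * (Real.log n / (n:ℝ)^c) := by
            rw [γseq, Real.rpow_neg (Nat.cast_nonneg n), div_eq_mul_inv]
            ring
  simpa [mul_add] using hlog.add hA

/-- Lemma 3.11 (Condition (3-1)): ℙ-almost surely, for every `δ > 0`,
`limsup_{n→∞} (Y_n(δ))^{α_n} < ∞`, where
`Y_n(δ) = a_n (c_n δ^{1/α_n})⁻¹ Σ_x 2^{-n} E[e^{β_n H_n(x)}·e·𝟙{e^{β_n H_n(x)}·e ≤ c_n δ^{1/α_n}} | H_n]`,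
`e` being a mean-one exponential independent of the environment and `α_n = γ_n/β_n`. -/
theorem truncated_sum_bounded_almost_surely
    (p : ℕ) (hp : 2 ≤ p) (c : ℝ) (hc0 : 0 < c) (hc1 : c < 1 / 2)
    (β : ℕ → ℝ) (β₀ : ℝ) (hβ₀ : 0 < β₀) (hβ : ∀ n : ℕ, β₀ ≤ β n)
    (B : ℝ) (hB : ∀ n : ℕ, γseq c n * β n ≤ B)
    {Ω : Type*} [MeasurableSpace Ω] (Pe : Measure Ω) [IsProbabilityMeasure Pe]
    (H : (n : ℕ) → V n → Ω → ℝ) (hHmeas : ∀ n x, Measurable (H n x))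
    (hH : ∀ n : ℕ, IsCenteredGaussianVector Pe (H n)
      (fun x y => (n : ℝ) * overlap n x y ^ p))
    {Ω' : Type*} [MeasurableSpace Ω'] (Pw : Measure Ω') [IsProbabilityMeasure Pw]
    (e : Ω' → ℝ) (hemeas : Measurable e)
    (he : ∀ y : ℝ, 0 ≤ y → Pw {ω' | y < e ω'} = ENNReal.ofReal (Real.exp (-y))) :
    ∀ᵐ ω ∂Pe, ∀ δ : ℝ, 0 < δ →
      IsBoundedUnder (· ≤ ·) atTop (fun n : ℕ =>
        (aseq c n * (cseq c β n * δ ^ (β n / γseq c n))⁻¹ *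
          ∑ x : V n, ((2 : ℝ) ^ n)⁻¹ *
            ∫ ω', Set.indicator
                {ω'' | Real.exp (β n * H n x ω) * e ω'' ≤
                  cseq c β n * δ ^ (β n / γseq c n)}
                (fun ω'' => Real.exp (β n * H n x ω) * e ω'') ω' ∂Pw)
          ^ (γseq c n / β n)) := by
  classical
  have hβpos : ∀ n, 0 < β n := fun n => lt_of_lt_of_le hβ₀ (hβ n)
  have hγnonneg : ∀ n : ℕ, 0 ≤ γseq c n := fun n => Real.rpow_nonneg (Nat.cast_nonneg n) _
  have hγpos : ∀ n : ℕ, 1 ≤ n → 0 < γseq c n := fun n hn =>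
    Real.rpow_pos_of_pos (by exact_mod_cast hn) _
  set Z : ℕ → Ω → ℝ :=
    fun n ω => ∑ x : V n, ((2:ℝ)^n)⁻¹ * rexp (γseq c n * H n x ω) with hZ
  have hHint : ∀ n : ℕ, 1 ≤ n → ∀ (x : V n) (t : ℝ),
      Integrable (fun ω => rexp (t * H n x ω)) Pe ∧
      ∫ ω, rexp (t * H n x ω) ∂Pe = rexp ((n:ℝ) * t^2 / 2) := by
    intro n hn x t
    have hv : ((n : ℝ≥0)) ≠ 0 := Nat.cast_ne_zero.mpr (by omega)
    have hmap := map_H (hH n) x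
    have hg := gauss_mgf_aux t hv
    have hgm : AEStronglyMeasurable (fun y : ℝ => rexp (t * y))
        (Measure.map (H n x) Pe) :=
      (Real.continuous_exp.comp (continuous_const.mul continuous_id)).aestronglyMeasurable
    rw [← hmap] at hg
    refine ⟨(integrable_map_measure hgm (hHmeas n x).aemeasurable).mp hg.1, ?_⟩
    have hcomp := integral_map (φ := H n x) (μ := Pe) (hHmeas n x).aemeasurable hgm
    rw [← hcomp, hg.2]
    norm_num
  have hZint : ∀ n : ℕ, 1 ≤ n → Integrable (Z n) Pe := by
    intro n hn
    exact integrable_finset_sum _ fun x _ => ((hHint n hn x _).1.const_mul _)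
  have hZmean : ∀ n : ℕ, 1 ≤ n → ∫ ω, Z n ω ∂Pe = rexp ((γseq c n)^2 * n / 2) := by
    intro n hn
    simp only [hZ]
    rw [integral_finset_sum _ (fun x _ => ((hHint n hn x _).1.const_mul _))]
    have hterm : ∀ x : V n, ∫ ω, ((2:ℝ)^n)⁻¹ * rexp (γseq c n * H n x ω) ∂Pe
        = ((2:ℝ)^n)⁻¹ * rexp ((γseq c n)^2 * n / 2) := by
      intro x
      rw [integral_const_mul, (hHint n hn x _).2]
      congr 2
      ring
    rw [Finset.sum_congr rfl fun x _ => hterm x, Finset.sum_const, Finset.card_univ]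
    have hcard : Fintype.card (V n) = 2 ^ n := by simp [Fintype.card_fun]
    rw [hcard, nsmul_eq_mul]
    have h2n : ((2:ℝ)^n) ≠ 0 := by positivity
    push_cast
    field_simp
  set A : ℕ → Set Ω :=
    fun n => {ω | rexp ((γseq c n)^2 * n / 2) * (n:ℝ)^2 ≤ Z n ω} with hA
  have hmarkov : ∀ n : ℕ, 1 ≤ n → Pe (A n) ≤ ENNReal.ofReal (((n:ℝ)^2)⁻¹) := by
    intro n hn
    have hnn : 0 ≤ᵐ[Pe] Z n := by
      refine Filter.Eventually.of_forall fun ω => ?_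
      simp only [hZ]
      exact Finset.sum_nonneg fun x _ => by positivity
    have h := mul_meas_ge_le_integral_of_nonneg hnn (hZint n hn)
      (rexp ((γseq c n)^2 * n / 2) * (n:ℝ)^2)
    rw [hZmean n hn] at h
    have hE : 0 < rexp ((γseq c n)^2 * n / 2) := Real.exp_pos _
    have hn2 : (0:ℝ) < (n:ℝ)^2 := by
      have : (0:ℝ) < (n:ℝ) := by exact_mod_cast hn
      positivity
    have h2 : (Pe (A n)).toReal * (n:ℝ)^2 ≤ 1 := by change _ * (Pe (A n)).toReal ≤ _ at h; nlinarith [ENNReal.toReal_nonneg (a := Pe (A n))]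
    have htoReal : (Pe (A n)).toReal ≤ ((n:ℝ)^2)⁻¹ := by
      rw [inv_eq_one_div, le_div_iff₀ hn2]
      exact h2
    calc Pe (A n) = ENNReal.ofReal ((Pe (A n)).toReal) :=
          (ENNReal.ofReal_toReal (measure_ne_top _ _)).symm
      _ ≤ _ := ENNReal.ofReal_le_ofReal htoReal
  have hsum : (∑' k : ℕ, Pe (A (k+1))) ≠ ⊤ := by
    have hb : ∀ k : ℕ, Pe (A (k+1)) ≤ ENNReal.ofReal ((((k:ℝ)+1)^2)⁻¹) := by
      intro k
      have := hmarkov (k+1) (by omega)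
      convert this using 3
      push_cast
      ring
    have hsummable : Summable (fun k : ℕ => (((k:ℝ)+1)^2)⁻¹) := by
      have h2 : Summable (fun n : ℕ => ((n:ℝ)^2)⁻¹) := by
        simpa [one_div] using Real.summable_one_div_nat_pow.mpr (by norm_num : 1 < 2)
      have := (_root_.summable_nat_add_iff (f := fun n : ℕ => ((n:ℝ)^2)⁻¹) 1).mpr h2
      convert this using 2 with k
      · rfl
      push_cast
      ring
    have hle := ENNReal.tsum_le_tsum hb
    refine ne_top_of_le_ne_top ?_ hle
    rw [← ENNReal.ofReal_tsum_of_nonneg (fun k => by positivity) hsummable]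
    exact ENNReal.ofReal_ne_top
  have hae := MeasureTheory.ae_eventually_notMem hsum
  have hγ0 : Filter.Tendsto (fun n : ℕ => γseq c n) Filter.atTop (nhds 0) :=
    (tendsto_rpow_neg_atTop hc0).comp tendsto_natCast_atTop_atTop
  filter_upwards [hae] with ω hω
  intro δ hδ
  have hωA : ∀ᶠ n in atTop, ω ∉ A n := by
    obtain ⟨N, hN⟩ := Filter.eventually_atTop.1 hω
    refine Filter.eventually_atTop.2 ⟨N + 1, fun n hn => ?_⟩
    have h1 : n - 1 + 1 = n := by omega
    rw [← h1]
    exact hN (n - 1) (by omega)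
  have hev3 : ∀ᶠ n in atTop, γseq c n < β₀ := hγ0.eventually (gt_mem_nhds hβ₀)
  have hev4 : ∀ᶠ n in atTop, γseq c n *
      (Real.log (Real.sqrt (2 * π * n) * (γseq c n)⁻¹ * (n:ℝ)^2) + |Real.log δ|) < β₀ :=
    (tendsto_γ_log hc0 hc1 |Real.log δ|).eventually (gt_mem_nhds hβ₀)
  refine isBoundedUnder_of_eventually_le (a := rexp 1) ?_
  filter_upwards [Filter.eventually_ge_atTop 1, hωA, hev3, hev4] with n hn1 hnA hγβ hγL
  have hγp : 0 < γseq c n := hγpos n hn1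
  have hbp : 0 < β n := hβpos n
  have hγne : γseq c n ≠ 0 := hγp.ne'
  have hbne : β n ≠ 0 := hbp.ne'
  have hnR : (0:ℝ) < (n:ℝ) := by exact_mod_cast hn1
  have hl0 : 0 < γseq c n / β n := div_pos hγp hbp
  have hl1 : γseq c n / β n ≤ 1 := by
    rw [div_le_one hbp]
    exact le_trans hγβ.le (hβ n)
  have hKpos : 0 < cseq c β n * δ ^ (β n / γseq c n) :=
    mul_pos (Real.exp_pos _) (Real.rpow_pos_of_pos hδ _)
  have hIle : ∀ x : V n,
      (∫ ω', Set.indicator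
        {ω'' | Real.exp (β n * H n x ω) * e ω'' ≤ cseq c β n * δ ^ (β n / γseq c n)}
        (fun ω'' => Real.exp (β n * H n x ω) * e ω'') ω' ∂Pw)
      ≤ (cseq c β n * δ ^ (β n / γseq c n)) ^ (1 - γseq c n / β n)
          * rexp (γseq c n * H n x ω) := by
    intro x
    have hXp : 0 < rexp (β n * H n x ω) := Real.exp_pos _
    refine le_trans (trunc_integral_le Pw e hemeas he hXp hKpos) ?_
    refine le_trans (min_le_rpow_mul hKpos hXp hl0.le hl1) ?_
    have hXpow : (rexp (β n * H n x ω)) ^ (γseq c n / β n)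
        = rexp (γseq c n * H n x ω) := by
      rw [← Real.exp_mul]
      congr 1
      field_simp
    rw [hXpow]
  have hInn : ∀ x : V n, 0 ≤
      ∫ ω', Set.indicator
        {ω'' | Real.exp (β n * H n x ω) * e ω'' ≤ cseq c β n * δ ^ (β n / γseq c n)}
        (fun ω'' => Real.exp (β n * H n x ω) * e ω'') ω' ∂Pw := by
    intro x
    refine integral_nonneg_of_ae ?_
    filter_upwards [exp_var_nonneg Pw e hemeas he] with ω' h
    exact Set.indicator_apply_nonneg fun _ => mul_nonneg (Real.exp_pos _).le h.le
  have hsum_le : (∑ x : V n, ((2:ℝ)^n)⁻¹ *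
      ∫ ω', Set.indicator
        {ω'' | Real.exp (β n * H n x ω) * e ω'' ≤ cseq c β n * δ ^ (β n / γseq c n)}
        (fun ω'' => Real.exp (β n * H n x ω) * e ω'') ω' ∂Pw)
      ≤ (cseq c β n * δ ^ (β n / γseq c n)) ^ (1 - γseq c n / β n) * Z n ω := by
    simp only [hZ]
    rw [Finset.mul_sum]
    refine Finset.sum_le_sum fun x _ => ?_
    rw [show (cseq c β n * δ ^ (β n / γseq c n)) ^ (1 - γseq c n / β n) *
        (((2:ℝ)^n)⁻¹ * rexp (γseq c n * H n x ω))
        = ((2:ℝ)^n)⁻¹ * ((cseq c β n * δ ^ (β n / γseq c n)) ^ (1 - γseq c n / β n) *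
          rexp (γseq c n * H n x ω)) by ring]
    exact mul_le_mul_of_nonneg_left (hIle x) (by positivity)
  have hZω : Z n ω ≤ rexp ((γseq c n)^2 * n / 2) * (n:ℝ)^2 := by
    have : ¬ (rexp ((γseq c n)^2 * n / 2) * (n:ℝ)^2 ≤ Z n ω) := hnA
    linarith [not_le.mp this]
  have hZnn : 0 ≤ Z n ω := by
    simp only [hZ]
    exact Finset.sum_nonneg fun x _ => by positivity
  have haseq_nonneg : 0 ≤ aseq c n := by
    rw [aseq]
    exact mul_nonneg (mul_nonneg (Real.sqrt_nonneg _) (inv_nonneg.mpr (hγnonneg n)))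
      (Real.exp_pos _).le
  have hKK : (cseq c β n * δ ^ (β n / γseq c n))⁻¹ *
      (cseq c β n * δ ^ (β n / γseq c n)) ^ (1 - γseq c n / β n)
      = rexp (-((γseq c n)^2 * n)) * δ⁻¹ := by
    have h1 : (cseq c β n * δ ^ (β n / γseq c n))⁻¹ *
        (cseq c β n * δ ^ (β n / γseq c n)) ^ (1 - γseq c n / β n)
        = (cseq c β n * δ ^ (β n / γseq c n)) ^ (-(γseq c n / β n)) := by
      rw [← Real.rpow_neg_one (cseq c β n * δ ^ (β n / γseq c n)),
        ← Real.rpow_add hKpos]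
      congr 1
      ring
    rw [h1, cseq, Real.mul_rpow (Real.exp_pos _).le (Real.rpow_pos_of_pos hδ _).le]
    congr 1
    · rw [← Real.exp_mul]
      congr 1
      field_simp
    · rw [← Real.rpow_mul hδ.le,
        show (β n / γseq c n) * (-(γseq c n / β n)) = -1 by field_simp,
        Real.rpow_neg_one]
  have hMpos : (0:ℝ) < Real.sqrt (2 * π * n) * (γseq c n)⁻¹ * (n:ℝ)^2 :=
    lt_of_lt_of_le one_pos (one_le_Mbound hc0 hn1)
  have hbase : aseq c n * (cseq c β n * δ ^ (β n / γseq c n))⁻¹ *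
      (∑ x : V n, ((2:ℝ)^n)⁻¹ *
        ∫ ω', Set.indicator
          {ω'' | Real.exp (β n * H n x ω) * e ω'' ≤ cseq c β n * δ ^ (β n / γseq c n)}
          (fun ω'' => Real.exp (β n * H n x ω) * e ω'') ω' ∂Pw)
      ≤ Real.sqrt (2 * π * n) * (γseq c n)⁻¹ * (n:ℝ)^2 / δ := by
    have hpre : 0 ≤ aseq c n * (cseq c β n * δ ^ (β n / γseq c n))⁻¹ :=
      mul_nonneg haseq_nonneg (inv_nonneg.mpr hKpos.le)
    calc aseq c n * (cseq c β n * δ ^ (β n / γseq c n))⁻¹ * (∑ x : V n, ((2:ℝ)^n)⁻¹ *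
        ∫ ω', Set.indicator
          {ω'' | Real.exp (β n * H n x ω) * e ω'' ≤ cseq c β n * δ ^ (β n / γseq c n)}
          (fun ω'' => Real.exp (β n * H n x ω) * e ω'') ω' ∂Pw)
        ≤ aseq c n * (cseq c β n * δ ^ (β n / γseq c n))⁻¹ *
          ((cseq c β n * δ ^ (β n / γseq c n)) ^ (1 - γseq c n / β n) * Z n ω) :=
        mul_le_mul_of_nonneg_left hsum_le hpre
      _ = aseq c n * ((cseq c β n * δ ^ (β n / γseq c n))⁻¹ *
          (cseq c β n * δ ^ (β n / γseq c n)) ^ (1 - γseq c n / β n)) * Z n ω := by ring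
      _ = aseq c n * (rexp (-((γseq c n)^2 * n)) * δ⁻¹) * Z n ω := by rw [hKK]
      _ ≤ aseq c n * (rexp (-((γseq c n)^2 * n)) * δ⁻¹) * (rexp ((γseq c n)^2 * n / 2) * (n:ℝ)^2) := by
        refine mul_le_mul_of_nonneg_left hZω ?_
        exact mul_nonneg haseq_nonneg (by positivity)
      _ = Real.sqrt (2 * π * n) * (γseq c n)⁻¹ * (n:ℝ)^2 / δ := by
        rw [aseq, div_eq_mul_inv]
        have hexp : rexp ((γseq c n)^2 * n / 2) * rexp (-((γseq c n)^2 * n)) *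
            rexp ((γseq c n)^2 * n / 2) = 1 := by
          rw [← Real.exp_add, ← Real.exp_add,
            show (γseq c n)^2 * (n:ℝ) / 2 + -((γseq c n)^2 * n) + (γseq c n)^2 * n / 2
              = 0 by ring, Real.exp_zero]
        calc Real.sqrt (2 * π * n) * (γseq c n)⁻¹ * rexp ((γseq c n)^2 * n / 2) *
            (rexp (-((γseq c n)^2 * n)) * δ⁻¹) * (rexp ((γseq c n)^2 * n / 2) * (n:ℝ)^2)
            = Real.sqrt (2 * π * n) * (γseq c n)⁻¹ * (n:ℝ)^2 * δ⁻¹ *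
              (rexp ((γseq c n)^2 * n / 2) * rexp (-((γseq c n)^2 * n)) *
                rexp ((γseq c n)^2 * n / 2)) := by ring
          _ = Real.sqrt (2 * π * n) * (γseq c n)⁻¹ * (n:ℝ)^2 * δ⁻¹ := by
              rw [hexp, mul_one]
  have hfinal : Real.log (Real.sqrt (2 * π * n) * (γseq c n)⁻¹ * (n:ℝ)^2 / δ) *
      (γseq c n / β n) ≤ 1 := by
    rw [Real.log_div hMpos.ne' hδ.ne']
    have hlogd : Real.log (Real.sqrt (2 * π * n) * (γseq c n)⁻¹ * (n:ℝ)^2) - Real.log δ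
        ≤ Real.log (Real.sqrt (2 * π * n) * (γseq c n)⁻¹ * (n:ℝ)^2) + |Real.log δ| := by
      linarith [neg_abs_le (Real.log δ)]
    have hLnn : 0 ≤ Real.log (Real.sqrt (2 * π * n) * (γseq c n)⁻¹ * (n:ℝ)^2) + |Real.log δ| :=
      add_nonneg (Real.log_nonneg (one_le_Mbound hc0 hn1)) (abs_nonneg _)
    have hmono : γseq c n / β n ≤ γseq c n / β₀ := by
      rw [div_le_div_iff₀ hbp hβ₀]
      exact mul_le_mul_of_nonneg_left (hβ n) (hγnonneg n)
    calc (Real.log (Real.sqrt (2 * π * n) * (γseq c n)⁻¹ * (n:ℝ)^2) - Real.log δ) *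
          (γseq c n / β n)
        ≤ (Real.log (Real.sqrt (2 * π * n) * (γseq c n)⁻¹ * (n:ℝ)^2) + |Real.log δ|) *
          (γseq c n / β n) := mul_le_mul_of_nonneg_right hlogd hl0.le
      _ ≤ (Real.log (Real.sqrt (2 * π * n) * (γseq c n)⁻¹ * (n:ℝ)^2) + |Real.log δ|) *
          (γseq c n / β₀) := mul_le_mul_of_nonneg_left hmono hLnn
      _ = (γseq c n * (Real.log (Real.sqrt (2 * π * n) * (γseq c n)⁻¹ * (n:ℝ)^2) +
          |Real.log δ|)) / β₀ := by ring
      _ ≤ 1 := (div_le_one hβ₀).mpr hγL.le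
  have hbase_nonneg : 0 ≤ aseq c n * (cseq c β n * δ ^ (β n / γseq c n))⁻¹ *
      (∑ x : V n, ((2:ℝ)^n)⁻¹ *
        ∫ ω', Set.indicator
          {ω'' | Real.exp (β n * H n x ω) * e ω'' ≤ cseq c β n * δ ^ (β n / γseq c n)}
          (fun ω'' => Real.exp (β n * H n x ω) * e ω'') ω' ∂Pw) := by
    refine mul_nonneg (mul_nonneg haseq_nonneg (inv_nonneg.mpr hKpos.le)) ?_
    exact Finset.sum_nonneg fun x _ => mul_nonneg (by positivity) (hInn x)
  calc (aseq c n * (cseq c β n * δ ^ (β n / γseq c n))⁻¹ *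
      (∑ x : V n, ((2:ℝ)^n)⁻¹ *
        ∫ ω', Set.indicator
          {ω'' | Real.exp (β n * H n x ω) * e ω'' ≤ cseq c β n * δ ^ (β n / γseq c n)}
          (fun ω'' => Real.exp (β n * H n x ω) * e ω'') ω' ∂Pw)) ^ (γseq c n / β n)
      ≤ (Real.sqrt (2 * π * n) * (γseq c n)⁻¹ * (n:ℝ)^2 / δ) ^ (γseq c n / β n) :=
        Real.rpow_le_rpow hbase_nonneg hbase hl0.le
    _ = rexp (Real.log (Real.sqrt (2 * π * n) * (γseq c n)⁻¹ * (n:ℝ)^2 / δ) *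
        (γseq c n / β n)) := by
        rw [Real.rpow_def_of_pos (div_pos hMpos hδ)]
    _ ≤ rexp 1 := Real.exp_le_exp.mpr hfinal
end

section
/- Let γ_n = n^{-c} for fixed c ∈ (0,1/2), let β_n ≥ β₀ > 0 be a sequence with γ_nβ_n bounded, and set α_n = γ_n/β_n, a_n = √(2πn)·γ_n^{-1}·e^{γ_n²n/2}, c_n = e^{γ_nβ_n n}. Let Z be a standard Gaussian random variable and e an independent mean-one exponential random variable. Then for every δ > 0 there exists N such that for all n ≥ N, (a_n/(c_n δ^{β_n/γ_n}))·E[e^{β_n√n·Z}·e·𝟙{e^{β_n√n·Z}·e ≤ c_n δ^{β_n/γ_n}}] ≤ 4/(δ·γ_n·β_n). -/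
open MeasureTheory ProbabilityTheory Real Set Filter

set_option maxHeartbeats 1000000

section helpers
lemma tmb_intg : Integrable (fun u : ℝ => Real.exp (-(u^2)/2)) := by
  have h : (fun u : ℝ => Real.exp (-(u^2)/2)) = fun u : ℝ => Real.exp (-(1/2 : ℝ)*u^2) := by
    funext u; congr 1; ring
  rw [h]
  exact integrable_exp_neg_mul_sq (by norm_num)
lemma tmb_deriv (u : ℝ) :
    HasDerivAt (fun v : ℝ => -Real.exp (-(v^2)/2)) (u * Real.exp (-(u^2)/2)) u := by
  have h1 : HasDerivAt (fun v : ℝ => -(v^2)/2) (-u) u := by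
    have := ((hasDerivAt_pow 2 u).neg).div_const 2
    refine this.congr_deriv ?_
    simp; ring
  have h2 := (h1.exp).neg
  refine h2.congr_deriv ?_
  ring

lemma tmb_tendsto : Tendsto (fun v : ℝ => -Real.exp (-(v^2)/2)) atTop (nhds 0) := by
  rw [show (0:ℝ) = -0 by ring]
  apply Filter.Tendsto.neg
  apply Real.tendsto_exp_atBot.comp
  have h1 : Tendsto (fun v : ℝ => v^2/2) atTop atTop :=
    (tendsto_pow_atTop (two_ne_zero)).atTop_div_const (by norm_num)
  have := tendsto_neg_atTop_atBot.comp h1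
  refine this.congr fun v => by simp [Function.comp]; ring

lemma tmb_key {x : ℝ} (hx : 0 < x) :
    ∫ u in Set.Ioi x, u * Real.exp (-(u^2)/2) = Real.exp (-(x^2)/2) := by
  have h := integral_Ioi_of_hasDerivAt_of_nonneg' (g := fun v : ℝ => -Real.exp (-(v^2)/2))
    (g' := fun u : ℝ => u * Real.exp (-(u^2)/2)) (a := x) (l := 0)
    (fun u _ => tmb_deriv u)
    (fun u hu => by
      have : 0 < u := lt_trans hx hu
      positivity) tmb_tendsto
  simpa using h

lemma tmb_key_int {x : ℝ} (hx : 0 < x) :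
    IntegrableOn (fun u : ℝ => u * Real.exp (-(u^2)/2)) (Set.Ioi x) := by
  refine integrableOn_Ioi_deriv_of_nonneg' (fun u _ => tmb_deriv u) (fun u hu => ?_) tmb_tendsto
  have : 0 < u := lt_trans hx hu
  positivity

lemma tmb_mills {x : ℝ} (hx : 0 < x) :
    ∫ u in Set.Ioi x, Real.exp (-(u^2)/2) ≤ Real.exp (-(x^2)/2) / x := by
  have step : ∫ u in Set.Ioi x, Real.exp (-(u^2)/2)
      ≤ ∫ u in Set.Ioi x, x⁻¹ * (u * Real.exp (-(u^2)/2)) := by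
    refine setIntegral_mono_on tmb_intg.integrableOn ((tmb_key_int hx).const_mul _)
      measurableSet_Ioi (fun u hu => ?_)
    have hu' : 0 < u := lt_trans hx hu
    have h1 : (1:ℝ) ≤ x⁻¹ * u := by
      rw [inv_mul_eq_div, le_div_iff₀ hx]
      simpa using le_of_lt hu
    calc Real.exp (-(u^2)/2) = 1 * Real.exp (-(u^2)/2) := by ring
      _ ≤ (x⁻¹ * u) * Real.exp (-(u^2)/2) := by
          exact mul_le_mul_of_nonneg_right h1 (Real.exp_nonneg _)
      _ = x⁻¹ * (u * Real.exp (-(u^2)/2)) := by ring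
  rw [integral_const_mul, tmb_key hx] at step
  calc ∫ u in Set.Ioi x, Real.exp (-(u^2)/2) ≤ x⁻¹ * Real.exp (-(x^2)/2) := step
    _ = Real.exp (-(x^2)/2) / x := by ring


lemma tmb_shift (f : ℝ → ℝ) (S : Set ℝ) (r : ℝ) :
    ∫ x in (fun x : ℝ => x + r) ⁻¹' S, f (x + r) = ∫ x in S, f x := by
  have A : MeasurableEmbedding (fun x : ℝ => x + r) :=
    (Homeomorph.addRight r).isClosedEmbedding.measurableEmbedding
  have h := A.setIntegral_map (μ := volume) f S
  rw [map_add_right_eq_self volume r] at h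
  exact h.symm

lemma tmb_gauss_density (h : ℝ → ℝ) (S : Set ℝ) (hS : MeasurableSet S) :
    ∫ z in S, h z ∂(gaussianReal 0 1)
      = ∫ z in S, gaussianPDFReal 0 1 z * h z := by
  rw [gaussianReal_of_var_ne_zero 0 one_ne_zero]
  have hd : gaussianPDF 0 1 = fun x => ((gaussianPDFReal 0 1 x).toNNReal : ENNReal) := rfl
  rw [hd, setIntegral_withDensity_eq_setIntegral_smul
    ((measurable_gaussianPDFReal 0 1).real_toNNReal) h hS]
  refine setIntegral_congr_fun hS fun x _ => ?_
  simp [NNReal.smul_def, Real.coe_toNNReal _ (gaussianPDFReal_nonneg 0 1 x)]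

lemma tmb_pdf_eq (x m : ℝ) :
    gaussianPDFReal 0 1 x * Real.exp (m * x)
      = (Real.sqrt (2*π))⁻¹ * (Real.exp (m^2/2) * Real.exp (-((x - m)^2)/2)) := by
  rw [gaussianPDFReal]
  push_cast
  rw [mul_one, mul_assoc, ← Real.exp_add, ← Real.exp_add]
  congr 2
  ring

lemma tmb_tilt_Iic (w m : ℝ) :
    ∫ z in Set.Iic w, Real.exp (m * z) ∂(gaussianReal 0 1)
      = (Real.sqrt (2*π))⁻¹ * Real.exp (m^2/2) * ∫ u in Set.Iic (w - m), Real.exp (-(u^2)/2) := by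
  rw [tmb_gauss_density _ _ measurableSet_Iic]
  calc ∫ z in Set.Iic w, gaussianPDFReal 0 1 z * Real.exp (m * z)
      = ∫ z in Set.Iic w, (Real.sqrt (2*π))⁻¹ * (Real.exp (m^2/2) * Real.exp (-((z - m)^2)/2)) := by
        simp_rw [tmb_pdf_eq]
    _ = (Real.sqrt (2*π))⁻¹ * (Real.exp (m^2/2) * ∫ z in Set.Iic w, Real.exp (-((z - m)^2)/2)) := by
        rw [← integral_const_mul]
        simp_rw [← integral_const_mul]
    _ = (Real.sqrt (2*π))⁻¹ * Real.exp (m^2/2) * ∫ u in Set.Iic (w - m), Real.exp (-(u^2)/2) := by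
        rw [mul_assoc]
        congr 1
        congr 1
        have h := tmb_shift (fun u => Real.exp (-(u^2)/2)) (Set.Iic (w - m)) (-m)
        have hpre : (fun x : ℝ => x + (-m)) ⁻¹' Set.Iic (w - m) = Set.Iic w := by
          ext x; simp [sub_eq_add_neg]
        rw [hpre] at h
        rw [← h]
        refine setIntegral_congr_fun measurableSet_Iic fun x _ => ?_
        rw [← sub_eq_add_neg]

lemma tmb_tilt_Ioi (w m : ℝ) :
    ∫ z in Set.Ioi w, Real.exp (-(m * z)) ∂(gaussianReal 0 1)
      = (Real.sqrt (2*π))⁻¹ * Real.exp (m^2/2) * ∫ u in Set.Ioi (w + m), Real.exp (-(u^2)/2) := by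
  rw [tmb_gauss_density _ _ measurableSet_Ioi]
  calc ∫ z in Set.Ioi w, gaussianPDFReal 0 1 z * Real.exp (-(m * z))
      = ∫ z in Set.Ioi w, (Real.sqrt (2*π))⁻¹ * (Real.exp (m^2/2) * Real.exp (-((z + m)^2)/2)) := by
        refine setIntegral_congr_fun measurableSet_Ioi fun x _ => ?_
        have := tmb_pdf_eq x (-m)
        rw [show -m * x = -(m * x) by ring, show (-m)^2 = m^2 by ring,
          show x - -m = x + m by ring] at this
        exact this
    _ = (Real.sqrt (2*π))⁻¹ * (Real.exp (m^2/2) * ∫ z in Set.Ioi w, Real.exp (-((z + m)^2)/2)) := by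
        rw [← integral_const_mul]
        simp_rw [← integral_const_mul]
    _ = (Real.sqrt (2*π))⁻¹ * Real.exp (m^2/2) * ∫ u in Set.Ioi (w + m), Real.exp (-(u^2)/2) := by
        rw [mul_assoc]
        congr 2
        have h := tmb_shift (fun u => Real.exp (-(u^2)/2)) (Set.Ioi (w + m)) m
        have hpre : (fun x : ℝ => x + m) ⁻¹' Set.Ioi (w + m) = Set.Ioi w := by
          ext x; simp
        rw [hpre] at h
        exact h

lemma tmb_Iic_Ioi (w : ℝ) :
    ∫ u in Set.Iic w, Real.exp (-(u^2)/2) = ∫ u in Set.Ioi (-w), Real.exp (-(u^2)/2) := by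
  have h := integral_comp_neg_Iic w (fun u => Real.exp (-(u^2)/2))
  rw [← h]
  refine setIntegral_congr_fun measurableSet_Iic fun x _ => ?_
  norm_num

end helpers

section expfacts

variable {Ω : Type*} [MeasurableSpace Ω] (P : Measure Ω) [IsProbabilityMeasure P]
  (e : Ω → ℝ) (hemeas : Measurable e)
  (he : ∀ y : ℝ, 0 ≤ y → P {ω | y < e ω} = ENNReal.ofReal (Real.exp (-y)))

include hemeas he

lemma tmb_e_zero : P {ω | e ω ≤ 0} = 0 := by
  have h := he 0 le_rfl
  have hset : {ω | e ω ≤ 0} = {ω | (0:ℝ) < e ω}ᶜ := by ext ω; simp [not_lt]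
  have hmeas : MeasurableSet {ω | (0:ℝ) < e ω} := hemeas measurableSet_Ioi
  rw [hset, measure_compl hmeas (measure_ne_top _ _), h]
  simp

lemma tmb_e_nonneg : 0 ≤ᵐ[P] e := by
  rw [Filter.EventuallyLE, ae_iff]
  refine measure_mono_null (fun ω hω => ?_) (tmb_e_zero P e hemeas he)
  simp only [Set.mem_setOf_eq, Pi.zero_apply, not_le] at hω ⊢
  exact le_of_lt hω

lemma tmb_e_lintegral : ∫⁻ ω, ENNReal.ofReal (e ω) ∂P = 1 := by
  rw [lintegral_eq_lintegral_meas_lt P (tmb_e_nonneg P e hemeas he) hemeas.aemeasurable]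
  have hcong : ∫⁻ t in Set.Ioi (0:ℝ), P {a | t < e a}
      = ∫⁻ t in Set.Ioi (0:ℝ), ENNReal.ofReal (Real.exp (-t)) := by
    refine setLIntegral_congr_fun measurableSet_Ioi (fun t ht => ?_)
    exact he t (le_of_lt ht)
  rw [hcong, ← ofReal_integral_eq_lintegral_ofReal]
  · rw [integral_exp_neg_Ioi_zero]; simp
  · have h := exp_neg_integrableOn_Ioi 0 (zero_lt_one)
    refine h.congr_fun (fun x _ => by norm_num) measurableSet_Ioi
  · exact Filter.Eventually.of_forall fun t => Real.exp_nonneg _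

lemma tmb_e_integrable : Integrable e P := by
  refine ⟨hemeas.aestronglyMeasurable, ?_⟩
  rw [hasFiniteIntegral_iff_norm]
  have hcong : ∫⁻ ω, ENNReal.ofReal (‖e ω‖) ∂P = ∫⁻ ω, ENNReal.ofReal (e ω) ∂P := by
    refine lintegral_congr_ae ?_
    filter_upwards [tmb_e_nonneg P e hemeas he] with ω hω
    rw [Real.norm_of_nonneg hω]
  rw [hcong, tmb_e_lintegral P e hemeas he]
  exact ENNReal.one_lt_top

lemma tmb_e_integral : ∫ ω, e ω ∂P = 1 := by
  rw [integral_eq_lintegral_of_nonneg_ae (tmb_e_nonneg P e hemeas he) hemeas.aestronglyMeasurable,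
    tmb_e_lintegral P e hemeas he]
  simp

lemma tmb_e_Iic {t : ℝ} (ht : 0 ≤ t) : P {ω | e ω ≤ t} ≤ ENNReal.ofReal t := by
  have hset : {ω | e ω ≤ t} = {ω | t < e ω}ᶜ := by ext ω; simp [not_lt]
  have hmeas : MeasurableSet {ω | t < e ω} := hemeas measurableSet_Ioi
  rw [hset, measure_compl hmeas (measure_ne_top _ _), he t ht, measure_univ]
  rw [tsub_le_iff_right, ← ENNReal.ofReal_add ht (Real.exp_nonneg _),
    show (1 : ENNReal) = ENNReal.ofReal 1 by simp]
  refine ENNReal.ofReal_le_ofReal ?_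
  have := Real.add_one_le_exp (-t)
  linarith

end expfacts

/-- Truncated first-moment estimate (3.83): with `γ_n = n^{-c}`, `c ∈ (0,1/2)`,
`β_n ≥ β₀ > 0`, `γ_nβ_n` bounded, `a_n = √(2πn)·γ_n⁻¹·e^{γ_n²n/2}`, `c_n = e^{γ_nβ_n n}`,
for a standard Gaussian `Z` and an independent mean-one exponential `e`, for every `δ > 0`
and all large `n`,
`(a_n/(c_n δ^{β_n/γ_n}))·E[e^{β_n√n Z}·e·𝟙{e^{β_n√n Z}·e ≤ c_n δ^{β_n/γ_n}}] ≤ 4/(δγ_nβ_n)`. -/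
theorem truncated_moment_bound
    (c : ℝ) (hc0 : 0 < c) (hc1 : c < 1 / 2)
    (β : ℕ → ℝ) (β₀ : ℝ) (hβ₀ : 0 < β₀) (hβ : ∀ n, β₀ ≤ β n)
    (B : ℝ) (hB : ∀ n : ℕ, (n : ℝ) ^ (-c) * β n ≤ B)
    {Ω : Type*} [MeasurableSpace Ω] (P : Measure Ω) [IsProbabilityMeasure P]
    (Z e : Ω → ℝ) (hZmeas : Measurable Z) (hemeas : Measurable e)
    (hZ : Measure.map Z P = gaussianReal 0 1)
    (he : ∀ y : ℝ, 0 ≤ y → P {ω | y < e ω} = ENNReal.ofReal (Real.exp (-y)))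
    (hindep : IndepFun Z e P) :
    ∀ δ : ℝ, 0 < δ → ∃ N : ℕ, ∀ n : ℕ, N ≤ n →
      (Real.sqrt (2 * π * n) * ((n : ℝ) ^ (-c))⁻¹ * Real.exp (((n : ℝ) ^ (-c)) ^ 2 * n / 2)) /
          (Real.exp ((n : ℝ) ^ (-c) * β n * n) * δ ^ (β n / (n : ℝ) ^ (-c))) *
        (∫ ω, Set.indicator
            {ω' | Real.exp (β n * Real.sqrt n * Z ω') * e ω' ≤
              Real.exp ((n : ℝ) ^ (-c) * β n * n) * δ ^ (β n / (n : ℝ) ^ (-c))}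
            (fun ω' => Real.exp (β n * Real.sqrt n * Z ω') * e ω') ω ∂P)
      ≤ 4 / (δ * (n : ℝ) ^ (-c) * β n) := by
  intro δ hδ
  set L := Real.log δ with hL
  -- eventually conditions
  have h1 : ∀ᶠ n : ℕ in atTop, (n:ℝ)^(-c) ≤ β₀/4 := by
    have ht : Filter.Tendsto (fun n : ℕ => (n:ℝ)^(-c)) atTop (nhds 0) :=
      (tendsto_rpow_neg_atTop hc0).comp tendsto_natCast_atTop_atTop
    exact ht.eventually (eventually_le_nhds (by positivity))
  have h2 : ∀ᶠ n : ℕ in atTop, |L| ≤ (β₀/4) * (n:ℝ)^(1-c) := by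
    have ht : Filter.Tendsto (fun n : ℕ => (β₀/4) * (n:ℝ)^(1-c)) atTop atTop := by
      refine Filter.Tendsto.const_mul_atTop (by positivity) ?_
      exact (tendsto_rpow_atTop (by linarith)).comp tendsto_natCast_atTop_atTop
    exact ht.eventually_ge_atTop _
  have hev := (h1.and h2).and (Filter.eventually_ge_atTop 1)
  rw [Filter.eventually_atTop] at hev
  obtain ⟨N, hN⟩ := hev
  refine ⟨N, fun n hn => ?_⟩
  obtain ⟨⟨hγsmall, hLsmall⟩, hn1⟩ := hN n hn
  have hnpos : (0:ℝ) < n := by exact_mod_cast Nat.lt_of_lt_of_le Nat.zero_lt_one hn1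
  set γ : ℝ := (n:ℝ)^(-c) with hγdef
  set b : ℝ := β n with hbdef
  set s : ℝ := Real.sqrt n with hsdef
  have hγpos : 0 < γ := Real.rpow_pos_of_pos hnpos _
  have hbpos : 0 < b := lt_of_lt_of_le hβ₀ (hβ n)
  have hb4 : β₀/4 ≤ b/4 := by have := hβ n; rw [← hbdef] at this; linarith
  have hspos : 0 < s := Real.sqrt_pos.mpr hnpos
  have hss : s * s = n := Real.mul_self_sqrt hnpos.le
  set r : ℝ := b * s with hrdef
  have hrpos : 0 < r := mul_pos hbpos hspos
  set M : ℝ := Real.exp (γ * b * n) * δ ^ (b / γ) with hMdef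
  have hMpos : 0 < M := mul_pos (Real.exp_pos _) (Real.rpow_pos_of_pos hδ _)
  have hlogM : Real.log M = γ * b * n + (b/γ) * L := by
    rw [hMdef, Real.log_mul (Real.exp_ne_zero _) (ne_of_gt (Real.rpow_pos_of_pos hδ _)),
      Real.log_exp, Real.log_rpow hδ]
  set z₀ : ℝ := Real.log M / r with hz₀def
  have hrz₀ : r * z₀ = Real.log M := by
    rw [hz₀def]; field_simp
  have hexp_rz₀ : Real.exp (r * z₀) = M := by rw [hrz₀, Real.exp_log hMpos]
  set A : ℝ := γ * s with hAdef
  have hApos : 0 < A := mul_pos hγpos hspos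
  have hAsq : A * A = γ^2 * n := by rw [hAdef, ← hss]; ring
  have hz₀A : z₀ = A + L / A := by
    rw [hz₀def, hlogM, hrdef, hAdef, ← hss]
    field_simp
  -- |z₀| ≤ (b/2) * s
  have hn1c : (n:ℝ)^(1-c) = γ * n := by
    rw [hγdef]
    rw [show (1 - c) = -c + 1 by ring, Real.rpow_add hnpos, Real.rpow_one]
  have hLA : |L| / A ≤ (b/4) * s := by
    rw [div_le_iff₀ hApos]
    calc |L| ≤ (β₀/4) * ((n:ℝ)^(1-c)) := hLsmall
      _ = (β₀/4) * (γ * (s * s)) := by rw [hn1c, hss]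
      _ ≤ (b/4) * (γ * (s * s)) := by
          refine mul_le_mul_of_nonneg_right hb4 (by positivity)
      _ = (b/4) * s * A := by rw [hAdef]; ring
  have hAle : A ≤ (b/4) * s := by
    rw [hAdef]
    calc γ * s ≤ (β₀/4) * s := mul_le_mul_of_nonneg_right hγsmall hspos.le
      _ ≤ (b/4) * s := mul_le_mul_of_nonneg_right hb4 hspos.le
  have hz₀abs : |z₀| ≤ (b/2) * s := by
    rw [hz₀A]
    calc |A + L/A| ≤ |A| + |L/A| := abs_add_le _ _
      _ = A + |L|/A := by rw [abs_of_pos hApos, abs_div, abs_of_pos hApos]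
      _ ≤ (b/4)*s + (b/4)*s := add_le_add hAle hLA
      _ = (b/2)*s := by ring
  have hbs2 : 0 < (b/2) * s := by positivity
  have hrz₀lb : (b/2) * s ≤ r - z₀ := by
    have := (abs_le.mp hz₀abs).2
    rw [hrdef]; linarith
  have hrz₀lb' : (b/2) * s ≤ r + z₀ := by
    have := (abs_le.mp hz₀abs).1
    rw [hrdef]; linarith
  -- gaussian tail bounds
  set C : ℝ := (Real.sqrt (2*π))⁻¹ * Real.exp (-(z₀^2)/2) with hCdef
  have hCpos : 0 < C := by
    rw [hCdef]
    have : (0:ℝ) < Real.sqrt (2*π) := Real.sqrt_pos.mpr (by positivity)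
    positivity
  have hT₁ : ∫ z in Set.Iic z₀, Real.exp (r * z) ∂(gaussianReal 0 1)
      ≤ C * M * (2 / (b * s)) := by
    have hpos : 0 < r - z₀ := lt_of_lt_of_le hbs2 hrz₀lb
    have hfrac : 1/(r - z₀) ≤ 2/(b*s) := by
      rw [show 2/(b*s) = 1/((b/2)*s) by field_simp]
      exact one_div_le_one_div_of_le hbs2 hrz₀lb
    rw [tmb_tilt_Iic z₀ r]
    rw [tmb_Iic_Ioi (z₀ - r), neg_sub]
    have hm := tmb_mills hpos
    calc (Real.sqrt (2*π))⁻¹ * Real.exp (r^2/2) * ∫ u in Set.Ioi (r - z₀), Real.exp (-(u^2)/2)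
        ≤ (Real.sqrt (2*π))⁻¹ * Real.exp (r^2/2) * (Real.exp (-((r - z₀)^2)/2) / (r - z₀)) := by
          refine mul_le_mul_of_nonneg_left hm (by positivity)
      _ = C * M * (1 / (r - z₀)) := by
          rw [hCdef, ← hexp_rz₀]
          rw [show (Real.sqrt (2*π))⁻¹ * Real.exp (r^2/2) * (Real.exp (-((r - z₀)^2)/2) / (r - z₀))
            = (Real.sqrt (2*π))⁻¹ * (Real.exp (r^2/2) * Real.exp (-((r - z₀)^2)/2)) * (1 / (r - z₀)) by ring]
          rw [← Real.exp_add, show r^2/2 + -((r - z₀)^2)/2 = r * z₀ + -(z₀^2)/2 by ring,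
            Real.exp_add]
          ring
      _ ≤ C * M * (2 / (b * s)) := by
          refine mul_le_mul_of_nonneg_left hfrac (by positivity)
  have hT₂ : ∫ z in Set.Ioi z₀, Real.exp (-(r * z)) ∂(gaussianReal 0 1)
      ≤ C * M⁻¹ * (2 / (b * s)) := by
    have hpos : 0 < z₀ + r := by
      have : 0 < r + z₀ := lt_of_lt_of_le hbs2 hrz₀lb'
      linarith
    have hfrac : 1/(z₀ + r) ≤ 2/(b*s) := by
      rw [show 2/(b*s) = 1/((b/2)*s) by field_simp]
      refine one_div_le_one_div_of_le hbs2 ?_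
      have := hrz₀lb'
      linarith
    rw [tmb_tilt_Ioi z₀ r]
    have hm := tmb_mills hpos
    calc (Real.sqrt (2*π))⁻¹ * Real.exp (r^2/2) * ∫ u in Set.Ioi (z₀ + r), Real.exp (-(u^2)/2)
        ≤ (Real.sqrt (2*π))⁻¹ * Real.exp (r^2/2) * (Real.exp (-((z₀ + r)^2)/2) / (z₀ + r)) := by
          refine mul_le_mul_of_nonneg_left hm (by positivity)
      _ = C * M⁻¹ * (1 / (z₀ + r)) := by
          rw [hCdef, show M⁻¹ = Real.exp (-(r * z₀)) by rw [Real.exp_neg, hexp_rz₀]]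
          rw [show (Real.sqrt (2*π))⁻¹ * Real.exp (r^2/2) * (Real.exp (-((z₀ + r)^2)/2) / (z₀ + r))
            = (Real.sqrt (2*π))⁻¹ * (Real.exp (r^2/2) * Real.exp (-((z₀ + r)^2)/2)) * (1 / (z₀ + r)) by ring]
          rw [← Real.exp_add, show r^2/2 + -((z₀ + r)^2)/2 = -(r * z₀) + -(z₀^2)/2 by ring,
            Real.exp_add]
          ring
      _ ≤ C * M⁻¹ * (2 / (b * s)) := by
          refine mul_le_mul_of_nonneg_left hfrac (by positivity)
  -- probabilistic step
  have hI : (∫ ω, Set.indicator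
      {ω' | Real.exp (r * Z ω') * e ω' ≤ M}
      (fun ω' => Real.exp (r * Z ω') * e ω') ω ∂P)
      ≤ (∫ z in Set.Iic z₀, Real.exp (r * z) ∂(gaussianReal 0 1))
        + M^2 * ∫ z in Set.Ioi z₀, Real.exp (-(r * z)) ∂(gaussianReal 0 1) := by
    set ν : Measure ℝ := Measure.map e P with hν
    have hν1 : IsProbabilityMeasure ν := Measure.isProbabilityMeasure_map hemeas.aemeasurable
    have hνIic : ∀ t : ℝ, 0 ≤ t → ν (Set.Iic t) ≤ ENNReal.ofReal t := by
      intro t ht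
      rw [hν, Measure.map_apply hemeas measurableSet_Iic]
      exact tmb_e_Iic P e hemeas he ht
    have hνIic0 : ν (Set.Iic 0) = 0 := by
      rw [hν, Measure.map_apply hemeas measurableSet_Iic]
      exact tmb_e_zero P e hemeas he
    have hνint : Integrable (fun y : ℝ => y) ν := by
      rw [hν]
      exact (integrable_map_measure aestronglyMeasurable_id hemeas.aemeasurable).mpr
        (tmb_e_integrable P e hemeas he)
    have hνmean : ∫ y, y ∂ν = 1 := by
      have h := integral_map (μ := P) (φ := e) (f := (id : ℝ → ℝ)) hemeas.aemeasurable
        aestronglyMeasurable_id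
      exact h.trans (tmb_e_integral P e hemeas he)
    have hmap : Measure.map (fun ω => (Z ω, e ω)) P = (gaussianReal 0 1).prod ν := by
      have h := (indepFun_iff_map_prod_eq_prod_map_map hZmeas.aemeasurable
        hemeas.aemeasurable).mp hindep
      rw [hZ] at h
      exact h
    have hkmeas0 : Measurable fun q : ℝ × ℝ => Real.exp (r * q.1) * q.2 :=
      (Real.measurable_exp.comp (measurable_fst.const_mul r)).mul measurable_snd
    set T : Set (ℝ × ℝ) := {q : ℝ × ℝ | Real.exp (r * q.1) * q.2 ≤ M} with hT
    have hTmeas : MeasurableSet T := measurableSet_le hkmeas0 measurable_const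
    set k : ℝ × ℝ → ℝ := fun p => Set.indicator T (fun q => Real.exp (r * q.1) * q.2) p with hk
    have hkmeas : Measurable k := hkmeas0.indicator hTmeas
    have hcomp : ∀ ω, Set.indicator {ω' | Real.exp (r * Z ω') * e ω' ≤ M}
        (fun ω' => Real.exp (r * Z ω') * e ω') ω = k (Z ω, e ω) := by
      intro ω
      simp only [hk]
      by_cases h : Real.exp (r * Z ω) * e ω ≤ M
      · rw [Set.indicator_of_mem (show ω ∈ {ω' | Real.exp (r * Z ω') * e ω' ≤ M} from h),
          Set.indicator_of_mem (show (Z ω, e ω) ∈ T from h)]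
      · rw [Set.indicator_of_notMem (show ω ∉ {ω' | Real.exp (r * Z ω') * e ω' ≤ M} from h),
          Set.indicator_of_notMem (show (Z ω, e ω) ∉ T from h)]
    have hstep : (∫ ω, Set.indicator {ω' | Real.exp (r * Z ω') * e ω' ≤ M}
        (fun ω' => Real.exp (r * Z ω') * e ω') ω ∂P) = ∫ p, k p ∂((gaussianReal 0 1).prod ν) := by
      rw [← hmap, integral_map (hZmeas.prodMk hemeas).aemeasurable hkmeas.aestronglyMeasurable]
      exact integral_congr_ae (Filter.Eventually.of_forall fun ω => hcomp ω)
    rw [hstep]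
    set F : ℝ → ℝ := Set.indicator (Set.Iic z₀) (fun z => Real.exp (r * z)) with hF
    have hFmeas : Measurable F :=
      (Real.measurable_exp.comp (measurable_id.const_mul r)).indicator measurableSet_Iic
    have hFnonneg : ∀ z, 0 ≤ F z := fun z =>
      Set.indicator_nonneg (fun x _ => (Real.exp_pos _).le) z
    have hFbd : ∀ z, ‖F z‖ ≤ Real.exp (r * z₀) := by
      intro z
      rw [Real.norm_eq_abs, abs_of_nonneg (hFnonneg z), hF]
      by_cases h : z ∈ Set.Iic z₀
      · rw [Set.indicator_of_mem h]
        exact Real.exp_le_exp.mpr (mul_le_mul_of_nonneg_left h hrpos.le)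
      · rw [Set.indicator_of_notMem h]
        positivity
    have hFint : Integrable F (gaussianReal 0 1) :=
      (integrable_const (Real.exp (r * z₀))).mono' hFmeas.aestronglyMeasurable
        (Filter.Eventually.of_forall hFbd)
    have hk₁int : Integrable (fun p : ℝ × ℝ => F p.1 * p.2) ((gaussianReal 0 1).prod ν) :=
      hFint.mul_prod hνint
    set W : Set (ℝ × ℝ) := {p : ℝ × ℝ | z₀ < p.1 ∧ p.2 ≤ M * Real.exp (-(r * p.1))} with hW
    have hWmeas : MeasurableSet W := by
      have h1 : MeasurableSet {p : ℝ × ℝ | z₀ < p.1} :=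
        measurableSet_lt measurable_const measurable_fst
      have h2 : MeasurableSet {p : ℝ × ℝ | p.2 ≤ M * Real.exp (-(r * p.1))} :=
        measurableSet_le measurable_snd
          (measurable_const.mul (Real.measurable_exp.comp (measurable_fst.const_mul r).neg))
      exact h1.inter h2
    have hk₂int : Integrable (fun p : ℝ × ℝ => M * Set.indicator W (1 : ℝ × ℝ → ℝ) p)
        ((gaussianReal 0 1).prod ν) :=
      (((integrable_const (1:ℝ)).indicator hWmeas).const_mul M)
    have hae : ∀ᵐ p ∂((gaussianReal 0 1).prod ν), 0 < p.2 := by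
      rw [ae_iff]
      have hset : {p : ℝ × ℝ | ¬ 0 < p.2} = Set.univ ×ˢ Set.Iic 0 := by
        ext p; simp [not_lt]
      rw [hset, Measure.prod_prod, hνIic0, mul_zero]
    have hbound : ∀ᵐ p ∂((gaussianReal 0 1).prod ν),
        k p ≤ F p.1 * p.2 + M * Set.indicator W (1 : ℝ × ℝ → ℝ) p ∧ 0 ≤ k p := by
      filter_upwards [hae] with p hp
      have hWnn : 0 ≤ M * Set.indicator W (1 : ℝ × ℝ → ℝ) p :=
        mul_nonneg hMpos.le (Set.indicator_nonneg (fun _ _ => zero_le_one) p)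
      constructor
      · by_cases hmem : p ∈ T
        · simp only [hk]
          rw [Set.indicator_of_mem hmem]
          by_cases hz : p.1 ≤ z₀
          · have hF1 : F p.1 = Real.exp (r * p.1) :=
              Set.indicator_of_mem (show p.1 ∈ Set.Iic z₀ from hz) _
            rw [hF1]
            linarith
          · have hF1 : F p.1 = 0 :=
              Set.indicator_of_notMem (show p.1 ∉ Set.Iic z₀ from hz) _
            have hmem' : Real.exp (r * p.1) * p.2 ≤ M := hmem
            have hWmem : p ∈ W := by
              refine ⟨lt_of_not_ge hz, ?_⟩
              have hcalc : p.2 = Real.exp (-(r * p.1)) * (Real.exp (r * p.1) * p.2) := by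
                rw [Real.exp_neg]
                field_simp
              rw [hcalc]
              calc Real.exp (-(r * p.1)) * (Real.exp (r * p.1) * p.2)
                  ≤ Real.exp (-(r * p.1)) * M :=
                    mul_le_mul_of_nonneg_left hmem' (Real.exp_pos _).le
                _ = M * Real.exp (-(r * p.1)) := mul_comm _ _
            rw [hF1, Set.indicator_of_mem hWmem]
            simp only [Pi.one_apply]
            have h0 : 0 ≤ 0 * p.2 := by simp
            linarith
        · simp only [hk]
          rw [Set.indicator_of_notMem hmem]
          have h1 : 0 ≤ F p.1 * p.2 := mul_nonneg (hFnonneg _) hp.le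
          linarith
      · by_cases hmem : p ∈ T
        · simp only [hk]
          rw [Set.indicator_of_mem hmem]
          exact mul_nonneg (Real.exp_pos _).le hp.le
        · simp only [hk]
          rw [Set.indicator_of_notMem hmem]
    have hkint : Integrable k ((gaussianReal 0 1).prod ν) := by
      refine (hk₁int.add hk₂int).mono' hkmeas.aestronglyMeasurable ?_
      filter_upwards [hbound] with p hp
      rw [Real.norm_eq_abs, abs_of_nonneg hp.2]
      exact hp.1
    have hmono := integral_mono_ae hkint (hk₁int.add hk₂int)
      (by filter_upwards [hbound] with p hp using hp.1)
    have hint1 : ∫ p : ℝ × ℝ, F p.1 * p.2 ∂((gaussianReal 0 1).prod ν)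
        = ∫ z in Set.Iic z₀, Real.exp (r * z) ∂(gaussianReal 0 1) := by
      rw [integral_prod_mul F (fun y => y), hνmean, mul_one, hF]
      exact integral_indicator measurableSet_Iic
    have hTint : IntegrableOn (fun z => M * Real.exp (-(r * z))) (Set.Ioi z₀)
        (gaussianReal 0 1) := by
      refine (integrable_const (M * Real.exp (-(r * z₀)))).mono'
        ((measurable_const.mul (Real.measurable_exp.comp
          (measurable_id.const_mul r).neg)).aestronglyMeasurable) ?_
      refine (ae_restrict_iff' measurableSet_Ioi).mpr (Filter.Eventually.of_forall fun z hz => ?_)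
      rw [Real.norm_eq_abs, abs_of_nonneg (by positivity)]
      refine mul_le_mul_of_nonneg_left ?_ hMpos.le
      refine Real.exp_le_exp.mpr ?_
      have hzz : z₀ ≤ z := le_of_lt hz
      exact neg_le_neg (mul_le_mul_of_nonneg_left hzz hrpos.le)
    have hTnn : 0 ≤ ∫ z in Set.Ioi z₀, Real.exp (-(r * z)) ∂(gaussianReal 0 1) :=
      setIntegral_nonneg measurableSet_Ioi fun z _ => (Real.exp_pos _).le
    have hint2 : ∫ p : ℝ × ℝ, M * Set.indicator W (1 : ℝ × ℝ → ℝ) p ∂((gaussianReal 0 1).prod ν)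
        ≤ M^2 * ∫ z in Set.Ioi z₀, Real.exp (-(r * z)) ∂(gaussianReal 0 1) := by
      rw [integral_const_mul, integral_indicator_one hWmeas]
      have hWbd : ((gaussianReal 0 1).prod ν) W
          ≤ ENNReal.ofReal (∫ z in Set.Ioi z₀, M * Real.exp (-(r * z)) ∂(gaussianReal 0 1)) := by
        rw [Measure.prod_apply hWmeas]
        have hsec : ∀ z : ℝ, ν (Prod.mk z ⁻¹' W)
            ≤ Set.indicator (Set.Ioi z₀)
              (fun z => ENNReal.ofReal (M * Real.exp (-(r * z)))) z := by
          intro z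
          by_cases hz : z₀ < z
          · have hpre : Prod.mk z ⁻¹' W = Set.Iic (M * Real.exp (-(r * z))) := by
              ext y; simp [hW, hz]
            rw [hpre, Set.indicator_of_mem (show z ∈ Set.Ioi z₀ from hz)]
            exact hνIic _ (by positivity)
          · have hpre : Prod.mk z ⁻¹' W = ∅ := by
              ext y; simp [hW, hz]
            rw [hpre]
            simp
        refine le_trans (lintegral_mono hsec) ?_
        rw [lintegral_indicator measurableSet_Ioi,
          ofReal_integral_eq_lintegral_ofReal hTint
            (Filter.Eventually.of_forall fun z => by positivity)]
      have h3 := ENNReal.toReal_mono ENNReal.ofReal_ne_top hWbd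
      rw [ENNReal.toReal_ofReal (by
        refine setIntegral_nonneg measurableSet_Ioi fun z _ => by positivity)] at h3
      rw [integral_const_mul] at h3
      calc M * (((gaussianReal 0 1).prod ν) W).toReal
          ≤ M * (M * ∫ z in Set.Ioi z₀, Real.exp (-(r * z)) ∂(gaussianReal 0 1)) :=
            mul_le_mul_of_nonneg_left h3 hMpos.le
        _ = M^2 * ∫ z in Set.Ioi z₀, Real.exp (-(r * z)) ∂(gaussianReal 0 1) := by ring
    refine le_trans (le_trans hmono (le_of_eq (integral_add hk₁int hk₂int))) ?_
    rw [hint1]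
    exact add_le_add le_rfl hint2
  -- final arithmetic
  have hsum : (∫ z in Set.Iic z₀, Real.exp (r * z) ∂(gaussianReal 0 1))
        + M^2 * ∫ z in Set.Ioi z₀, Real.exp (-(r * z)) ∂(gaussianReal 0 1)
      ≤ C * M * (4 / (b * s)) := by
    have h2 : M^2 * ∫ z in Set.Ioi z₀, Real.exp (-(r * z)) ∂(gaussianReal 0 1)
        ≤ C * M * (2 / (b * s)) := by
      calc M^2 * ∫ z in Set.Ioi z₀, Real.exp (-(r * z)) ∂(gaussianReal 0 1)
          ≤ M^2 * (C * M⁻¹ * (2 / (b * s))) := by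
            refine mul_le_mul_of_nonneg_left hT₂ (by positivity)
        _ = C * M * (2 / (b * s)) := by
            field_simp
    calc _ ≤ C * M * (2 / (b * s)) + C * M * (2 / (b * s)) := add_le_add hT₁ h2
      _ = C * M * (4 / (b * s)) := by ring
  have haM : 0 < Real.sqrt (2 * π * n) * γ⁻¹ * Real.exp (γ ^ 2 * n / 2) / M := by
    have : (0:ℝ) < Real.sqrt (2 * π * n) := Real.sqrt_pos.mpr (by positivity)
    positivity
  have hInn := hI.trans hsum
  calc Real.sqrt (2 * π * n) * γ⁻¹ * Real.exp (γ ^ 2 * n / 2) / M *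
        (∫ ω, Set.indicator {ω' | Real.exp (r * Z ω') * e ω' ≤ M}
          (fun ω' => Real.exp (r * Z ω') * e ω') ω ∂P)
      ≤ Real.sqrt (2 * π * n) * γ⁻¹ * Real.exp (γ ^ 2 * n / 2) / M * (C * M * (4 / (b * s))) := by
        refine mul_le_mul_of_nonneg_left hInn haM.le
    _ = Real.sqrt (2 * π * n) * γ⁻¹ * Real.exp (γ ^ 2 * n / 2) * C * (4 / (b * s)) := by
        field_simp
    _ ≤ 4 / (δ * γ * b) := by
        have hsqrt : Real.sqrt (2 * π * (n:ℝ)) = Real.sqrt (2*π) * s := by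
          rw [hsdef, ← Real.sqrt_mul (by positivity : (0:ℝ) ≤ 2*π)]
        have hsq2π : (0:ℝ) < Real.sqrt (2*π) := Real.sqrt_pos.mpr (by positivity)
        have hexpb : Real.exp (γ ^ 2 * n / 2) * Real.exp (-(z₀^2)/2) ≤ δ⁻¹ := by
          rw [← Real.exp_add]
          have harg : γ ^ 2 * (n:ℝ) / 2 + -(z₀^2)/2 = -L - L^2/(2*(A*A)) := by
            rw [hz₀A, ← hAsq]
            field_simp
            ring
          rw [harg, show δ⁻¹ = Real.exp (-L) by rw [hL, Real.exp_neg, Real.exp_log hδ]]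
          refine Real.exp_le_exp.mpr ?_
          have : 0 ≤ L^2/(2*(A*A)) := by positivity
          linarith
        have hcancel : Real.sqrt (2 * π * (n:ℝ)) * γ⁻¹ * Real.exp (γ ^ 2 * n / 2) * C * (4 / (b * s))
            = (Real.exp (γ ^ 2 * n / 2) * Real.exp (-(z₀^2)/2)) * (4 / (γ * b)) := by
          rw [hsqrt, hCdef]
          field_simp
        rw [hcancel]
        calc (Real.exp (γ ^ 2 * n / 2) * Real.exp (-(z₀^2)/2)) * (4 / (γ * b))
            ≤ δ⁻¹ * (4 / (γ * b)) := by
              refine mul_le_mul_of_nonneg_right hexpb (by positivity)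
          _ = 4 / (δ * γ * b) := by
              field_simp
end

section
/- Let γ_n = n^{-c} for fixed c ∈ (0,1/2), let β_n ≥ β₀ > 0 be a sequence with γ_nβ_n bounded, and set α_n = γ_n/β_n, a_n = √(2πn)·γ_n^{-1}·e^{γ_n²n/2}, c_n = e^{γ_nβ_n n}. Let Z be a standard Gaussian random variable and e an independent mean-one exponential random variable. Then for every v > 0, lim_{n→∞} a_n·γ_n²·v·P(e^{β_n√n·Z}·e > c_n·v^{β_n/γ_n}) = 1; in particular P(e^{β_n√n·Z}·e > c_n·v^{β_n/γ_n}) = (1+o(1))·a_n^{-1}·γ_n^{-2}·v^{-1} as n → ∞. -/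
open MeasureTheory ProbabilityTheory Real Filter Topology

section helpers
variable {v : ℝ}

lemma keyC (hv : 0 < v) (g t : ℝ) (hg : 0 < g) (ht : 0 < t)
    (hz : 0 < g * t + Real.log v / (g * t)) :
    Real.sqrt (2 * π * t ^ 2) * g⁻¹ * Real.exp (g ^ 2 * t ^ 2 / 2) * g ^ 2 * v *
      ((Real.sqrt (2 * π))⁻¹ *
        Real.exp (-(g * t + Real.log v / (g * t)) ^ 2 / 2) /
        (g * t + Real.log v / (g * t)))
    = g * t / (g * t + Real.log v / (g * t)) *
        Real.exp (-(Real.log v ^ 2 / (2 * (g * t) ^ 2))) := by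
  have hsq : Real.sqrt (2 * π * t ^ 2) = Real.sqrt (2 * π) * t := by
    rw [Real.sqrt_mul (by positivity), Real.sqrt_sq ht.le]
  have hsqrt : Real.sqrt (2 * π) ≠ 0 := by positivity
  have hz' : g * t + Real.log v / (g * t) ≠ 0 := hz.ne'
  have hE : Real.exp (g ^ 2 * t ^ 2 / 2) * Real.exp (Real.log v) *
      Real.exp (-(g * t + Real.log v / (g * t)) ^ 2 / 2)
      = Real.exp (-(Real.log v ^ 2 / (2 * (g * t) ^ 2))) := by
    rw [← Real.exp_add, ← Real.exp_add]
    congr 1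
    field_simp
    ring
  rw [hsq]
  nth_rewrite 1 [show v = Real.exp (Real.log v) from (Real.exp_log hv).symm]
  rw [show Real.sqrt (2 * π) * t * g⁻¹ * Real.exp (g ^ 2 * t ^ 2 / 2) * g ^ 2 *
      Real.exp (Real.log v) *
      ((Real.sqrt (2 * π))⁻¹ * Real.exp (-(g * t + Real.log v / (g * t)) ^ 2 / 2) /
        (g * t + Real.log v / (g * t)))
      = (Real.sqrt (2 * π) * (Real.sqrt (2 * π))⁻¹) * (g⁻¹ * g ^ 2 * t /
          (g * t + Real.log v / (g * t))) *
        (Real.exp (g ^ 2 * t ^ 2 / 2) * Real.exp (Real.log v) *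
          Real.exp (-(g * t + Real.log v / (g * t)) ^ 2 / 2)) from by ring,
    mul_inv_cancel₀ hsqrt, hE, one_mul,
    show g⁻¹ * g ^ 2 * t = g * t from by field_simp]

lemma keyT (b g t L : ℝ) (hg : g ≠ 0) (ht : t ≠ 0) :
    g * b * t ^ 2 + L * (b / g) = b * t * (g * t + L / (g * t)) := by
  field_simp

end helpers

lemma prob_eq {Ω : Type*} [MeasurableSpace Ω] (P : Measure Ω) [IsProbabilityMeasure P]
    (Z e : Ω → ℝ) (hZmeas : Measurable Z) (hemeas : Measurable e)
    (hZ : Measure.map Z P = gaussianReal 0 1)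
    (he : ∀ y : ℝ, 0 ≤ y → P {ω | y < e ω} = ENNReal.ofReal (Real.exp (-y)))
    (hindep : IndepFun Z e P) (σ T : ℝ) (hT : 0 < T) :
    (P {ω | T < Real.exp (σ * Z ω) * e ω}).toReal
      = ∫ z : ℝ, Real.exp (-(T * Real.exp (-(σ * z)))) * gaussianPDFReal 0 1 z := by
  have hmape : ∀ y : ℝ, 0 ≤ y → (P.map e) (Set.Ioi y) = ENNReal.ofReal (Real.exp (-y)) := by
    intro y hy
    rw [Measure.map_apply hemeas measurableSet_Ioi]
    exact he y hy
  have hprod : P.map (fun ω => (Z ω, e ω)) = (P.map Z).prod (P.map e) :=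
    (indepFun_iff_map_prod_eq_prod_map_map hZmeas.aemeasurable hemeas.aemeasurable).mp hindep
  have hsmeas : MeasurableSet {p : ℝ × ℝ | T < Real.exp (σ * p.1) * p.2} := by
    apply measurableSet_lt measurable_const
    exact ((measurable_fst.const_mul σ).exp.mul measurable_snd)
  have h1 : P {ω | T < Real.exp (σ * Z ω) * e ω}
      = ((P.map Z).prod (P.map e)) {p : ℝ × ℝ | T < Real.exp (σ * p.1) * p.2} := by
    rw [← hprod, Measure.map_apply (hZmeas.prodMk hemeas) hsmeas]
    rfl
  have h2 : ((P.map Z).prod (P.map e)) {p : ℝ × ℝ | T < Real.exp (σ * p.1) * p.2}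
      = ∫⁻ z, ENNReal.ofReal (Real.exp (-(T * Real.exp (-(σ * z))))) ∂(P.map Z) := by
    rw [Measure.prod_apply hsmeas]
    refine lintegral_congr fun z => ?_
    have hpre : (Prod.mk z ⁻¹' {p : ℝ × ℝ | T < Real.exp (σ * p.1) * p.2})
        = Set.Ioi (T * Real.exp (-(σ * z))) := by
      ext y
      simp only [Set.mem_preimage, Set.mem_setOf_eq, Set.mem_Ioi]
      rw [Real.exp_neg]
      rw [mul_comm (Real.exp (σ * z)) y, ← div_eq_mul_inv, div_lt_iff₀ (Real.exp_pos _)]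
    rw [hpre, hmape _ (by positivity)]
  have hGcont : Continuous fun z : ℝ => Real.exp (-(T * Real.exp (-(σ * z)))) := by
    fun_prop
  have hG01 : ∀ z : ℝ, 0 ≤ Real.exp (-(T * Real.exp (-(σ * z)))) ∧
      Real.exp (-(T * Real.exp (-(σ * z)))) ≤ 1 := by
    intro z
    refine ⟨(Real.exp_pos _).le, Real.exp_le_one_iff.mpr (neg_nonpos.mpr (by positivity))⟩
  have hint : Integrable (fun z : ℝ =>
      Real.exp (-(T * Real.exp (-(σ * z)))) * gaussianPDFReal 0 1 z) := by
    refine (integrable_gaussianPDFReal 0 1).mono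
      (hGcont.measurable.mul (measurable_gaussianPDFReal 0 1)).aestronglyMeasurable
      (ae_of_all _ fun z => ?_)
    rw [Real.norm_eq_abs, Real.norm_eq_abs, abs_mul,
      abs_of_nonneg (hG01 z).1, abs_of_nonneg (gaussianPDFReal_nonneg 0 1 z)]
    exact mul_le_of_le_one_left (gaussianPDFReal_nonneg 0 1 z) (hG01 z).2
  have h3 : P {ω | T < Real.exp (σ * Z ω) * e ω}
      = ∫⁻ z, ENNReal.ofReal (Real.exp (-(T * Real.exp (-(σ * z)))) * gaussianPDFReal 0 1 z) := by
    rw [h1, h2, hZ, gaussianReal_of_var_ne_zero _ one_ne_zero,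
      lintegral_withDensity_eq_lintegral_mul _ (measurable_gaussianPDF 0 1)
        hGcont.measurable.ennreal_ofReal]
    refine lintegral_congr fun z => ?_
    simp only [Pi.mul_apply, gaussianPDF]
    rw [← ENNReal.ofReal_mul (gaussianPDFReal_nonneg 0 1 z), mul_comm]
  rw [h3, ← ofReal_integral_eq_lintegral_ofReal hint
    (ae_of_all _ fun z => mul_nonneg (hG01 z).1 (gaussianPDFReal_nonneg 0 1 z)),
    ENNReal.toReal_ofReal]
  exact integral_nonneg fun z => mul_nonneg (hG01 z).1 (gaussianPDFReal_nonneg 0 1 z)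

lemma tendsto_gumbel_integral (k w : ℕ → ℝ) (hk : Tendsto k atTop atTop)
    (hw : Tendsto w atTop atTop) :
    Tendsto (fun n => ∫ s : ℝ, Real.exp (-Real.exp (-(k n * s))) *
      Real.exp (-s - s ^ 2 / (2 * (w n) ^ 2))) atTop (𝓝 1) := by
  set F : ℕ → ℝ → ℝ := fun n s => Real.exp (-Real.exp (-(k n * s))) *
      Real.exp (-s - s ^ 2 / (2 * (w n) ^ 2)) with hF
  set f : ℝ → ℝ := Set.indicator (Set.Ioi 0) (fun s => Real.exp (-s)) with hf
  set bound : ℝ → ℝ := fun s =>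
    if 0 < s then Real.exp (-s) else Real.exp (1/2) * Real.exp (-(s + 1) ^ 2 / 2) with hbound
  have hfint : ∫ s : ℝ, f s = 1 := by
    rw [hf, integral_indicator measurableSet_Ioi, integral_exp_neg_Ioi_zero]
  have hboundint : Integrable bound := by
    have h1 : IntegrableOn bound (Set.Ioi 0) := by
      refine (exp_neg_integrableOn_Ioi 0 one_pos).congr_fun ?_ measurableSet_Ioi
      intro s hs
      simp [hbound, Set.mem_Ioi.mp hs]
    have h2 : IntegrableOn bound (Set.Iic 0) := by
      have : Integrable (fun s : ℝ => Real.exp (1/2) * Real.exp (-(s + 1) ^ 2 / 2)) := by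
        have := (integrable_exp_neg_mul_sq (by norm_num : (0:ℝ) < 1/2)).comp_add_right 1
        refine (this.const_mul (Real.exp (1/2))).congr (ae_of_all _ fun s => ?_)
        simp only []
        rw [show -(1/2)*(s+1)^2 = -(s+1)^2/2 by ring]
      refine this.integrableOn.congr_fun ?_ measurableSet_Iic
      intro s hs
      simp [hbound, not_lt.mpr (Set.mem_Iic.mp hs)]
    have := h2.union h1
    rwa [Set.Iic_union_Ioi, integrableOn_univ] at this
  have hmain : Tendsto (fun n => ∫ s : ℝ, F n s) atTop (𝓝 (∫ s : ℝ, f s)) := by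
    refine tendsto_integral_filter_of_dominated_convergence bound ?_ ?_ hboundint ?_
    · refine Eventually.of_forall fun n => ?_
      have : Continuous (F n) := by fun_prop
      exact this.aestronglyMeasurable
    · filter_upwards [hk.eventually_ge_atTop 1] with n hkn
      refine ae_of_all _ fun s => ?_
      have hF0 : 0 ≤ F n s := by positivity
      rw [Real.norm_eq_abs, abs_of_nonneg hF0]
      rcases lt_or_ge 0 s with hs | hs
      · simp only [hbound, if_pos hs]
        calc F n s ≤ 1 * Real.exp (-s - s ^ 2 / (2 * (w n) ^ 2)) := by
              apply mul_le_mul_of_nonneg_right _ (Real.exp_pos _).le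
              exact Real.exp_le_one_iff.mpr (neg_nonpos.mpr (Real.exp_pos _).le)
          _ ≤ Real.exp (-s) := by
              rw [one_mul]
              apply Real.exp_le_exp.mpr
              have : 0 ≤ s ^ 2 / (2 * (w n) ^ 2) := by positivity
              linarith
      · simp only [hbound, if_neg (not_lt.mpr hs)]
        have hq : s ^ 2 / 2 ≤ Real.exp (-(k n * s)) := by
          have h1 : -s ≤ -(k n * s) := by nlinarith
          have h2 : (-s) ^ 2 / 2 ≤ Real.exp (-s) := by
            nlinarith [Real.quadratic_le_exp_of_nonneg (neg_nonneg.mpr hs)]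
          calc s ^ 2 / 2 = (-s) ^ 2 / 2 := by ring
            _ ≤ Real.exp (-s) := h2
            _ ≤ Real.exp (-(k n * s)) := Real.exp_le_exp.mpr h1
        calc F n s ≤ Real.exp (-(s ^ 2 / 2)) * Real.exp (-s) := by
              apply mul_le_mul (Real.exp_le_exp.mpr (by linarith)) ?_ (Real.exp_pos _).le
                (Real.exp_pos _).le
              apply Real.exp_le_exp.mpr
              have : 0 ≤ s ^ 2 / (2 * (w n) ^ 2) := by positivity
              linarith
          _ = Real.exp (1/2) * Real.exp (-(s + 1) ^ 2 / 2) := by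
              rw [← Real.exp_add, ← Real.exp_add]; ring_nf
    · have h0 : ∀ᵐ s : ℝ, s ≠ 0 := by
        refine (ae_iff.mpr ?_)
        simp only [not_ne_iff]
        have : {s : ℝ | s = 0} = {0} := by ext; simp
        rw [this]
        exact Real.volume_singleton
      filter_upwards [h0] with s hs0
      have hw2 : Tendsto (fun n => Real.exp (-s - s ^ 2 / (2 * (w n) ^ 2))) atTop
          (𝓝 (Real.exp (-s))) := by
        have hdiv : Tendsto (fun n => s ^ 2 / (2 * (w n) ^ 2)) atTop (𝓝 0) := by
          apply Tendsto.div_atTop tendsto_const_nhds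
          exact (hw.atTop_mul_atTop₀ hw).const_mul_atTop two_pos |>.congr fun n => by ring
        have hsub : Tendsto (fun n => -s - s ^ 2 / (2 * (w n) ^ 2)) atTop (𝓝 (-s)) := by
          simpa using (tendsto_const_nhds (x := -s) (f := atTop)).sub hdiv
        exact (Real.continuous_exp.tendsto (-s)).comp hsub
      rcases lt_or_gt_of_ne hs0 with hs | hs
      · -- s < 0 : limit 0
        have hfs : f s = 0 := by simp [hf, Set.indicator, not_lt.mpr hs.le, Set.mem_Ioi]
        rw [hfs]
        have h1 : Tendsto (fun n => Real.exp (-Real.exp (-(k n * s)))) atTop (𝓝 0) := by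
          have hks : Tendsto (fun n => k n * s) atTop atBot := hk.atTop_mul_const_of_neg hs
          have : Tendsto (fun n => -(k n * s)) atTop atTop := tendsto_neg_atBot_atTop.comp hks
          have h2 : Tendsto (fun n => Real.exp (-(k n * s))) atTop atTop :=
            Real.tendsto_exp_atTop.comp this
          have h3 : Tendsto (fun n => -Real.exp (-(k n * s))) atTop atBot :=
            tendsto_neg_atTop_atBot.comp h2
          exact Real.tendsto_exp_atBot.comp h3
        simpa using h1.mul hw2
      · -- s > 0 : limit exp (-s)
        have hfs : f s = Real.exp (-s) := by simp [hf, Set.indicator, hs]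
        rw [hfs]
        have h1 : Tendsto (fun n => Real.exp (-Real.exp (-(k n * s)))) atTop (𝓝 1) := by
          have hks : Tendsto (fun n => k n * s) atTop atTop := hk.atTop_mul_const hs
          have h2 : Tendsto (fun n => -(k n * s)) atTop atBot := tendsto_neg_atTop_atBot.comp hks
          have h3 : Tendsto (fun n => Real.exp (-(k n * s))) atTop (𝓝 0) :=
            Real.tendsto_exp_atBot.comp h2
          have h4 : Tendsto (fun n => -Real.exp (-(k n * s))) atTop (𝓝 0) := by
            simpa using h3.neg
          simpa [Function.comp_def] using (Real.continuous_exp.tendsto 0).comp h4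
        simpa using h1.mul hw2
  rw [hfint] at hmain
  exact hmain

lemma comp_shift_scale (f : ℝ → ℝ) (z₀ : ℝ) (hz₀ : 0 < z₀) :
    ∫ s : ℝ, f (z₀ + z₀⁻¹ * s) = z₀ * ∫ z : ℝ, f z := by
  have h := MeasureTheory.Measure.integral_comp_mul_left (fun u => f (z₀ + u)) z₀⁻¹
  rw [h, inv_inv, abs_of_pos hz₀, smul_eq_mul]
  congr 1
  exact integral_add_left_eq_self f z₀

lemma subst_integral (σ z₀ : ℝ) (hz₀ : 0 < z₀) :
    ∫ z : ℝ, Real.exp (-(Real.exp (σ * z₀) * Real.exp (-(σ * z)))) * gaussianPDFReal 0 1 z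
      = (Real.sqrt (2 * π))⁻¹ * Real.exp (-z₀ ^ 2 / 2) / z₀ *
        ∫ s : ℝ, Real.exp (-Real.exp (-(σ / z₀ * s))) *
          Real.exp (-s - s ^ 2 / (2 * z₀ ^ 2)) := by
  have hz₀' : z₀ ≠ 0 := hz₀.ne'
  have hsqrt : Real.sqrt (2 * π) ≠ 0 := by positivity
  have key : ∀ s : ℝ, Real.exp (-Real.exp (-(σ / z₀ * s))) *
      Real.exp (-s - s ^ 2 / (2 * z₀ ^ 2))
      = (Real.sqrt (2 * π) * Real.exp (z₀ ^ 2 / 2)) *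
        (Real.exp (-(Real.exp (σ * z₀) * Real.exp (-(σ * (z₀ + z₀⁻¹ * s))))) *
          gaussianPDFReal 0 1 (z₀ + z₀⁻¹ * s)) := by
    intro s
    have h1 : Real.exp (σ * z₀) * Real.exp (-(σ * (z₀ + z₀⁻¹ * s)))
        = Real.exp (-(σ / z₀ * s)) := by
      rw [← Real.exp_add]
      congr 1
      field_simp
      ring
    have h2 : gaussianPDFReal 0 1 (z₀ + z₀⁻¹ * s)
        = (Real.sqrt (2 * π))⁻¹ * (Real.exp (z₀ ^ 2 / 2))⁻¹ *
          Real.exp (-s - s ^ 2 / (2 * z₀ ^ 2)) := by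
      rw [gaussianPDFReal]
      push_cast
      rw [mul_one, ← Real.exp_neg, mul_assoc, ← Real.exp_add]
      congr 1
      field_simp
      ring
    rw [h1, h2]
    rw [show Real.sqrt (2*π) * Real.exp (z₀^2/2) *
        (Real.exp (-Real.exp (-(σ / z₀ * s))) *
          ((Real.sqrt (2*π))⁻¹ * (Real.exp (z₀^2/2))⁻¹ *
            Real.exp (-s - s^2/(2*z₀^2))))
        = (Real.sqrt (2*π) * (Real.sqrt (2*π))⁻¹) *
          (Real.exp (z₀^2/2) * (Real.exp (z₀^2/2))⁻¹) *
          (Real.exp (-Real.exp (-(σ / z₀ * s))) * Real.exp (-s - s^2/(2*z₀^2))) from by ring,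
      mul_inv_cancel₀ hsqrt, mul_inv_cancel₀ (Real.exp_ne_zero _), one_mul, one_mul]
  have step1 : ∫ s : ℝ, Real.exp (-Real.exp (-(σ / z₀ * s))) *
      Real.exp (-s - s ^ 2 / (2 * z₀ ^ 2))
      = (Real.sqrt (2 * π) * Real.exp (z₀ ^ 2 / 2)) *
        ∫ s : ℝ, Real.exp (-(Real.exp (σ * z₀) * Real.exp (-(σ * (z₀ + z₀⁻¹ * s))))) *
          gaussianPDFReal 0 1 (z₀ + z₀⁻¹ * s) := by
    simp_rw [key]
    exact integral_const_mul _ _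
  have step2 : (∫ s : ℝ, Real.exp (-(Real.exp (σ * z₀) * Real.exp (-(σ * (z₀ + z₀⁻¹ * s))))) *
      gaussianPDFReal 0 1 (z₀ + z₀⁻¹ * s))
      = z₀ * ∫ z : ℝ, Real.exp (-(Real.exp (σ * z₀) * Real.exp (-(σ * z)))) *
          gaussianPDFReal 0 1 z :=
    comp_shift_scale (fun z => Real.exp (-(Real.exp (σ * z₀) * Real.exp (-(σ * z)))) *
      gaussianPDFReal 0 1 z) z₀ hz₀
  rw [step1, step2]
  rw [show (Real.sqrt (2*π))⁻¹ * Real.exp (-z₀^2/2) / z₀ *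
      (Real.sqrt (2*π) * Real.exp (z₀^2/2) *
        (z₀ * ∫ z : ℝ, Real.exp (-(Real.exp (σ * z₀) * Real.exp (-(σ * z)))) *
          gaussianPDFReal 0 1 z))
      = (Real.sqrt (2*π) * (Real.sqrt (2*π))⁻¹) *
        (Real.exp (z₀^2/2) * Real.exp (-z₀^2/2)) * (z₀ / z₀) *
        ∫ z : ℝ, Real.exp (-(Real.exp (σ * z₀) * Real.exp (-(σ * z)))) *
          gaussianPDFReal 0 1 z from by ring,
    mul_inv_cancel₀ hsqrt, ← Real.exp_add, div_self hz₀']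
  rw [show z₀^2/2 + -z₀^2/2 = 0 by ring, Real.exp_zero]
  norm_num


/-- Tail asymptotics (3.93): with `γ_n = n^{-c}`, `c ∈ (0,1/2)`, `β_n ≥ β₀ > 0`,
`γ_nβ_n` bounded, `a_n = √(2πn)·γ_n⁻¹·e^{γ_n²n/2}`, `c_n = e^{γ_nβ_n n}`, for a standard
Gaussian `Z` and an independent mean-one exponential `e`, for every `v > 0`,
`a_n·γ_n²·v·P(e^{β_n√n Z}·e > c_n v^{β_n/γ_n}) → 1`, i.e. the tail probability equals
`(1+o(1))·a_n⁻¹γ_n⁻²v⁻¹`. -/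
theorem tail_probability_asymptotics
    (c : ℝ) (hc0 : 0 < c) (hc1 : c < 1 / 2)
    (β : ℕ → ℝ) (β₀ : ℝ) (hβ₀ : 0 < β₀) (hβ : ∀ n : ℕ, β₀ ≤ β n)
    (B : ℝ) (hB : ∀ n : ℕ, (n : ℝ) ^ (-c) * β n ≤ B)
    {Ω : Type*} [MeasurableSpace Ω] (P : Measure Ω) [IsProbabilityMeasure P]
    (Z e : Ω → ℝ) (hZmeas : Measurable Z) (hemeas : Measurable e)
    (hZ : Measure.map Z P = gaussianReal 0 1)
    (he : ∀ y : ℝ, 0 ≤ y → P {ω | y < e ω} = ENNReal.ofReal (Real.exp (-y)))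
    (hindep : IndepFun Z e P) :
    ∀ v : ℝ, 0 < v →
      Tendsto (fun n : ℕ =>
        (Real.sqrt (2 * π * n) * ((n : ℝ) ^ (-c))⁻¹ *
            Real.exp (((n : ℝ) ^ (-c)) ^ 2 * n / 2)) *
          ((n : ℝ) ^ (-c)) ^ 2 * v *
          (P {ω | Real.exp ((n : ℝ) ^ (-c) * β n * n) * v ^ (β n / (n : ℝ) ^ (-c)) <
            Real.exp (β n * Real.sqrt n * Z ω) * e ω}).toReal)
        atTop (nhds 1) := by
  intro v hv
  set L : ℝ := Real.log v with hLdef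
  -- the key sequences
  set m : ℕ → ℝ := fun n => (n : ℝ) ^ (-c) * Real.sqrt n with hmdef
  set z₀ : ℕ → ℝ := fun n => m n + L / m n with hz₀def
  set σ : ℕ → ℝ := fun n => β n * Real.sqrt n with hσdef
  -- m → ∞
  have hmtop : Tendsto m atTop atTop := by
    have h1 : Tendsto (fun n : ℕ => ((n : ℝ)) ^ ((1 : ℝ) / 2 - c)) atTop atTop :=
      (tendsto_rpow_atTop (by linarith)).comp tendsto_natCast_atTop_atTop
    refine h1.congr' ?_
    filter_upwards [eventually_ge_atTop 1] with n hn
    have hn0 : (0 : ℝ) < n := by exact_mod_cast hn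
    simp only [hmdef]
    rw [Real.sqrt_eq_rpow, ← Real.rpow_add hn0]
    congr 1
    ring
  have hLm : Tendsto (fun n => L / m n) atTop (𝓝 0) :=
    Tendsto.div_atTop tendsto_const_nhds hmtop
  have hz₀top : Tendsto z₀ atTop atTop := by
    have := hLm.add_atTop hmtop
    refine this.congr fun n => ?_
    simp only [hz₀def]
    ring
  -- eventual positivity facts
  have hm1 : ∀ᶠ n in atTop, 1 ≤ m n := hmtop.eventually_ge_atTop 1
  have hsmall : ∀ᶠ n in atTop, |L / m n| < 1 / 2 := by
    have h := hLm
    rw [Metric.tendsto_nhds] at h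
    simpa only [Real.dist_eq, sub_zero] using h (1 / 2) (by norm_num)
  -- σ/z₀ → ∞
  have hktop : Tendsto (fun n => σ n / z₀ n) atTop atTop := by
    have hcmp : Tendsto (fun n : ℕ => β₀ / 2 * (n : ℝ) ^ c) atTop atTop := by
      apply Tendsto.const_mul_atTop (by linarith)
      exact (tendsto_rpow_atTop hc0).comp tendsto_natCast_atTop_atTop
    refine tendsto_atTop_mono' atTop ?_ hcmp
    filter_upwards [eventually_ge_atTop 1, hm1, hsmall] with n hn1 hmn hsn
    have hn0 : (0 : ℝ) < n := by exact_mod_cast hn1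
    have hg : (0 : ℝ) < (n : ℝ) ^ (-c) := Real.rpow_pos_of_pos hn0 _
    have ht : (0 : ℝ) < Real.sqrt n := Real.sqrt_pos.mpr hn0
    have hm0 : 0 < m n := lt_of_lt_of_le one_pos hmn
    obtain ⟨hs1, hs2⟩ := abs_lt.mp hsn
    have hz₀pos : 0 < z₀ n := by
      simp only [hz₀def]; linarith
    have hz₀le : z₀ n ≤ 2 * m n := by
      simp only [hz₀def]; linarith
    have hσ0 : 0 ≤ σ n := by
      simp only [hσdef]
      exact mul_nonneg (le_trans hβ₀.le (hβ n)) ht.le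
    have step1 : σ n / (2 * m n) ≤ σ n / z₀ n :=
      div_le_div_of_nonneg_left hσ0 hz₀pos hz₀le
    refine le_trans ?_ step1
    have hγinv : ((n : ℝ) ^ (-c))⁻¹ = (n : ℝ) ^ c := by
      rw [Real.rpow_neg hn0.le, inv_inv]
    have heq : σ n / (2 * m n) = β n / 2 * (n : ℝ) ^ c := by
      simp only [hσdef, hmdef]
      rw [← hγinv]
      field_simp
    rw [heq]
    have : β₀ / 2 ≤ β n / 2 := by linarith [hβ n]
    apply mul_le_mul_of_nonneg_right this (Real.rpow_nonneg hn0.le _)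
  -- the gumbel integral → 1
  have hI := tendsto_gumbel_integral (fun n => σ n / z₀ n) z₀ hktop hz₀top
  -- m² → ∞ and L/m² → 0
  have hm2top : Tendsto (fun n => (m n) ^ 2) atTop atTop := by
    have := hmtop.atTop_mul_atTop₀ hmtop
    refine this.congr fun n => (sq (m n)).symm
  have hLm2 : Tendsto (fun n => L ^ 2 / (2 * (m n) ^ 2)) atTop (𝓝 0) :=
    Tendsto.div_atTop tendsto_const_nhds (hm2top.const_mul_atTop two_pos)
  have hLm2' : Tendsto (fun n => L / (m n) ^ 2) atTop (𝓝 0) :=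
    Tendsto.div_atTop tendsto_const_nhds hm2top
  -- m/z₀ → 1
  have hmz : Tendsto (fun n => m n / z₀ n) atTop (𝓝 1) := by
    have hq : Tendsto (fun n => z₀ n / m n) atTop (𝓝 1) := by
      have h1 : Tendsto (fun n => 1 + L / (m n) ^ 2) atTop (𝓝 1) := by
        simpa using (tendsto_const_nhds (x := (1:ℝ)) (f := atTop)).add hLm2'
      refine Tendsto.congr' ?_ h1
      filter_upwards [hm1] with n hmn
      have hm0 : m n ≠ 0 := by positivity
      simp only [hz₀def]
      field_simp
    have := hq.inv₀ one_ne_zero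
    simp only [inv_one] at this
    refine this.congr fun n => ?_
    rw [inv_div]
  -- exp part → 1
  have hexp1 : Tendsto (fun n => Real.exp (-(L ^ 2 / (2 * (m n) ^ 2)))) atTop (𝓝 1) := by
    have h0 : Tendsto (fun n => -(L ^ 2 / (2 * (m n) ^ 2))) atTop (𝓝 0) := by
      simpa using hLm2.neg
    simpa [Function.comp_def] using (Real.continuous_exp.tendsto 0).comp h0
  have hC : Tendsto (fun n => m n / z₀ n * Real.exp (-(L ^ 2 / (2 * (m n) ^ 2))))
      atTop (𝓝 1) := by
    simpa using hmz.mul hexp1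
  -- assemble
  refine Tendsto.congr' ?_ (by simpa using hC.mul hI)
  filter_upwards [eventually_ge_atTop 1, hm1, hsmall] with n hn1 hmn hsn
  have hn0 : (0 : ℝ) < n := by exact_mod_cast hn1
  have hg : (0 : ℝ) < (n : ℝ) ^ (-c) := Real.rpow_pos_of_pos hn0 _
  have ht : (0 : ℝ) < Real.sqrt n := Real.sqrt_pos.mpr hn0
  have hm0 : 0 < m n := lt_of_lt_of_le one_pos hmn
  obtain ⟨hs1, hs2⟩ := abs_lt.mp hsn
  have hz₀pos : 0 < z₀ n := by simp only [hz₀def]; linarith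
  -- T = exp (σ n * z₀ n)
  have hTeq : Real.exp ((n : ℝ) ^ (-c) * β n * n) * v ^ (β n / (n : ℝ) ^ (-c))
      = Real.exp (σ n * z₀ n) := by
    rw [Real.rpow_def_of_pos hv, ← Real.exp_add]
    congr 1
    have hk := keyT (β n) ((n : ℝ) ^ (-c)) (Real.sqrt n) L hg.ne' ht.ne'
    rw [Real.sq_sqrt hn0.le] at hk
    simpa only [hσdef, hz₀def, hmdef] using hk
  have hT0 : 0 < Real.exp ((n : ℝ) ^ (-c) * β n * n) * v ^ (β n / (n : ℝ) ^ (-c)) := by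
    positivity
  have hprob := prob_eq P Z e hZmeas hemeas hZ he hindep (σ n)
    (Real.exp ((n : ℝ) ^ (-c) * β n * n) * v ^ (β n / (n : ℝ) ^ (-c))) hT0
  have hprob' : (P {ω | Real.exp ((n : ℝ) ^ (-c) * β n * n) * v ^ (β n / (n : ℝ) ^ (-c)) <
      Real.exp (β n * Real.sqrt n * Z ω) * e ω}).toReal
      = (Real.sqrt (2 * π))⁻¹ * Real.exp (-(z₀ n) ^ 2 / 2) / z₀ n *
        ∫ s : ℝ, Real.exp (-Real.exp (-(σ n / z₀ n * s))) *
          Real.exp (-s - s ^ 2 / (2 * (z₀ n) ^ 2)) := by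
    rw [show {ω | Real.exp ((n : ℝ) ^ (-c) * β n * n) * v ^ (β n / (n : ℝ) ^ (-c)) <
        Real.exp (β n * Real.sqrt n * Z ω) * e ω}
        = {ω | Real.exp ((n : ℝ) ^ (-c) * β n * n) * v ^ (β n / (n : ℝ) ^ (-c)) <
          Real.exp (σ n * Z ω) * e ω} from rfl]
    rw [hprob, hTeq]
    exact subst_integral (σ n) (z₀ n) hz₀pos
  -- final algebra
  have hkc := keyC hv ((n : ℝ) ^ (-c)) (Real.sqrt n) hg ht (by simpa [hmdef] using hz₀pos)
  rw [Real.sq_sqrt hn0.le] at hkc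
  rw [hprob']
  calc m n / z₀ n * Real.exp (-(L ^ 2 / (2 * (m n) ^ 2))) *
        ∫ s : ℝ, Real.exp (-Real.exp (-(σ n / z₀ n * s))) *
          Real.exp (-s - s ^ 2 / (2 * (z₀ n) ^ 2))
      = (Real.sqrt (2 * π * n) * ((n : ℝ) ^ (-c))⁻¹ *
            Real.exp (((n : ℝ) ^ (-c)) ^ 2 * n / 2) * ((n : ℝ) ^ (-c)) ^ 2 * v *
          ((Real.sqrt (2 * π))⁻¹ * Real.exp (-(z₀ n) ^ 2 / 2) / z₀ n)) *
        ∫ s : ℝ, Real.exp (-Real.exp (-(σ n / z₀ n * s))) *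
          Real.exp (-s - s ^ 2 / (2 * (z₀ n) ^ 2)) := by
        rw [show Real.sqrt (2 * π * n) * ((n : ℝ) ^ (-c))⁻¹ *
            Real.exp (((n : ℝ) ^ (-c)) ^ 2 * n / 2) * ((n : ℝ) ^ (-c)) ^ 2 * v *
            ((Real.sqrt (2 * π))⁻¹ * Real.exp (-(z₀ n) ^ 2 / 2) / z₀ n)
            = m n / z₀ n * Real.exp (-(L ^ 2 / (2 * (m n) ^ 2))) from by
          simpa only [hmdef, hz₀def, hLdef] using hkc]
    _ = _ := by ring
end

section
/- For all natural numbers n and d with 1 ≤ d and 2d < n, the following inequality of real numbers holds: Σ_{l=1}^{d} (n/l)·Σ_{j=0}^{l−1} ∏_{k=j+1}^{l} k/(n−k+1) ≤ d/(1 − 2d/n). -/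
open Finset

/-- The birth-death hitting-time formula for the Ehrenfest chain: the expected hitting time
`E₀ T_d = Σ_{l=1}^{d} (n/l)·Σ_{j=0}^{l−1} ∏_{k=j+1}^{l} k/(n−k+1)` is bounded by
`d/(1 − 2d/n)` whenever `1 ≤ d` and `2d < n`. -/
theorem ehrenfest_hitting_time_bound (n d : ℕ) (hd : 1 ≤ d) (hdn : 2 * d < n) :
    ∑ l ∈ Icc 1 d, ((n : ℝ) / l) *
      ∑ j ∈ range l, ∏ k ∈ Icc (j + 1) l, (k : ℝ) / ((n : ℝ) - k + 1)
    ≤ (d : ℝ) / (1 - 2 * d / n) := by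
  have hNn : (0:ℝ) < n := by exact_mod_cast (show 0 < n by omega)
  have hD1 : (1:ℝ) ≤ d := by exact_mod_cast hd
  have h2D : 2 * (d:ℝ) < n := by exact_mod_cast hdn
  have key : ∀ l ∈ Icc 1 d,
      ((n : ℝ) / l) * ∑ j ∈ range l, ∏ k ∈ Icc (j + 1) l, (k : ℝ) / ((n : ℝ) - k + 1)
      ≤ (n:ℝ) / ((n:ℝ) - 2*d) := by
    intro l hl
    rw [mem_Icc] at hl
    obtain ⟨hl1, hld⟩ := hl
    have hL1 : (1:ℝ) ≤ l := by exact_mod_cast hl1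
    have hLd : (l:ℝ) ≤ d := by exact_mod_cast hld
    have h2L : 2 * (l:ℝ) < n := by linarith
    have hden : (0:ℝ) < (n:ℝ) - l + 1 := by linarith
    set ρ : ℝ := (l:ℝ) / ((n:ℝ) - l + 1) with hρ
    have hρ0 : 0 ≤ ρ := by positivity
    have hρ1 : ρ < 1 := by
      rw [hρ, div_lt_one hden]; linarith
    have h1ρ : 0 < 1 - ρ := by linarith
    have hprod : ∀ j ∈ range l,
        ∏ k ∈ Icc (j + 1) l, (k : ℝ) / ((n : ℝ) - k + 1) ≤ ρ ^ (l - j) := by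
      intro j hj
      have hle : ∏ k ∈ Icc (j + 1) l, (k : ℝ) / ((n : ℝ) - k + 1)
          ≤ ∏ _k ∈ Icc (j + 1) l, ρ := by
        apply Finset.prod_le_prod
        · intro k hk
          rw [mem_Icc] at hk
          have hkL : (k:ℝ) ≤ l := by exact_mod_cast hk.2
          have : (0:ℝ) < (n:ℝ) - k + 1 := by linarith
          positivity
        · intro k hk
          rw [mem_Icc] at hk
          have hkL : (k:ℝ) ≤ l := by exact_mod_cast hk.2
          have hk0 : (0:ℝ) ≤ k := by positivity
          have hdk : (0:ℝ) < (n:ℝ) - l + 1 := hden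
          have hdk' : (n:ℝ) - l + 1 ≤ (n:ℝ) - k + 1 := by linarith
          rw [hρ]
          exact div_le_div₀ (by linarith) hkL hden hdk'
      rw [Finset.prod_const, Nat.card_Icc] at hle
      have : l + 1 - (j + 1) = l - j := by omega
      rwa [this] at hle
    have hsum : ∑ j ∈ range l, ρ ^ (l - j) ≤ ρ / (1 - ρ) := by
      have hre : ∑ j ∈ range l, ρ ^ (l - j) = ρ * ∑ i ∈ range l, ρ ^ i := by
        rw [Finset.mul_sum, ← Finset.sum_range_reflect (fun i => ρ * ρ ^ i) l]
        apply Finset.sum_congr rfl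
        intro j hj
        rw [mem_range] at hj
        rw [show l - j = (l - 1 - j) + 1 from by omega, pow_succ']
      have hgeom : ∑ i ∈ range l, ρ ^ i ≤ 1 / (1 - ρ) := by
        rw [geom_sum_eq (ne_of_lt hρ1)]
        rw [div_le_iff_of_neg (by linarith : ρ - 1 < 0)]
        have heq : 1 / (1 - ρ) * (ρ - 1) = -1 := by
          field_simp
          ring
        rw [heq]
        have := pow_nonneg hρ0 l
        linarith
      calc ∑ j ∈ range l, ρ ^ (l - j) = ρ * ∑ i ∈ range l, ρ ^ i := hre
        _ ≤ ρ * (1 / (1 - ρ)) := by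
            exact mul_le_mul_of_nonneg_left hgeom hρ0
        _ = ρ / (1 - ρ) := by ring
    have hL0 : (0:ℝ) < l := by linarith
    have hstep : ((n : ℝ) / l) * ∑ j ∈ range l, ∏ k ∈ Icc (j + 1) l, (k : ℝ) / ((n : ℝ) - k + 1)
        ≤ ((n:ℝ) / l) * (ρ / (1 - ρ)) := by
      apply mul_le_mul_of_nonneg_left _ (by positivity)
      exact le_trans (Finset.sum_le_sum hprod) hsum
    have h2L1 : (0:ℝ) < (n:ℝ) - 2*l + 1 := by linarith
    have heq2 : ((n:ℝ) / l) * (ρ / (1 - ρ)) = (n:ℝ) / ((n:ℝ) - 2*l + 1) := by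
      have h1ρeq : 1 - ρ = ((n:ℝ) - 2*l + 1) / ((n:ℝ) - l + 1) := by
        rw [hρ]
        field_simp
        ring
      rw [hρ, h1ρeq]
      field_simp
    have hfin : (n:ℝ) / ((n:ℝ) - 2*l + 1) ≤ (n:ℝ) / ((n:ℝ) - 2*d) := by
      apply div_le_div_of_nonneg_left (le_of_lt hNn) (by linarith) (by linarith)
    linarith [hstep, heq2 ▸ hstep]
  calc ∑ l ∈ Icc 1 d, ((n : ℝ) / l) *
      ∑ j ∈ range l, ∏ k ∈ Icc (j + 1) l, (k : ℝ) / ((n : ℝ) - k + 1)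
      ≤ ∑ _l ∈ Icc 1 d, (n:ℝ) / ((n:ℝ) - 2*d) := Finset.sum_le_sum key
    _ = d * ((n:ℝ) / ((n:ℝ) - 2*d)) := by
        rw [Finset.sum_const, Nat.card_Icc]
        simp [nsmul_eq_mul]
    _ = (d:ℝ) / (1 - 2 * d / n) := by
        have h1 : (n:ℝ) - 2*d ≠ 0 := by linarith
        have h2 : (n:ℝ) ≠ 0 := ne_of_gt hNn
        field_simp
end

section
/- Let p be a real number with p ≥ 2, let γ ∈ (0, 1/2], and let u ∈ (0,1). Then γ² − I(u) − γ²/(1 + |1−2u|^p) ≤ −(u − 1/2)², where I(u) = u·log u + (1−u)·log(1−u) + log 2. -/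
open Real Set

private noncomputable def fEnt : ℝ → ℝ :=
  fun x => x * Real.log x + (1 - x) * Real.log (1 - x) + Real.log 2 - 2 * (x - 1/2) ^ 2

private noncomputable def gEnt : ℝ → ℝ :=
  fun x => Real.log x - Real.log (1 - x) - (4 * x - 2)

private lemma hasDerivAt_gEnt {x : ℝ} (hx0 : 0 < x) (hx1 : x < 1) :
    HasDerivAt gEnt (1 / x + 1 / (1 - x) - 4) x := by
  have h1 : HasDerivAt (fun y : ℝ => Real.log y) (1 / x) x := by
    simpa [one_div] using Real.hasDerivAt_log (ne_of_gt hx0)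
  have h2 : HasDerivAt (fun y : ℝ => (1 : ℝ) - y) (-1) x := by
    simpa using (hasDerivAt_id x).const_sub 1
  have h3 : HasDerivAt (fun y : ℝ => Real.log (1 - y)) (-(1 / (1 - x))) x := by
    have := (Real.hasDerivAt_log (by linarith : (1:ℝ) - x ≠ 0)).comp x h2
    exact this.congr_deriv (by ring)
  have h4 : HasDerivAt (fun y : ℝ => 4 * y - 2) 4 x := by
    simpa using ((hasDerivAt_id x).const_mul 4).sub_const 2
  have := (h1.sub h3).sub h4
  exact this.congr_deriv (by ring)

private lemma hasDerivAt_fEnt {x : ℝ} (hx0 : 0 < x) (hx1 : x < 1) :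
    HasDerivAt fEnt (gEnt x) x := by
  have hne : (1:ℝ) - x ≠ 0 := by linarith
  have h1 : HasDerivAt (fun y : ℝ => y * Real.log y) (Real.log x + 1) x := by
    have h := (hasDerivAt_id x).mul (Real.hasDerivAt_log (ne_of_gt hx0))
    exact h.congr_deriv (by simp [ne_of_gt hx0])
  have h2 : HasDerivAt (fun y : ℝ => (1 : ℝ) - y) (-1) x := by
    simpa using (hasDerivAt_id x).const_sub 1
  have h3 : HasDerivAt (fun y : ℝ => Real.log (1 - y)) (-(1 / (1 - x))) x := by
    have := (Real.hasDerivAt_log hne).comp x h2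
    exact this.congr_deriv (by ring)
  have h4 : HasDerivAt (fun y : ℝ => (1 - y) * Real.log (1 - y))
      ((-1) * Real.log (1 - x) + (1 - x) * (-(1 / (1 - x)))) x := h2.mul h3
  have h5 : HasDerivAt (fun y : ℝ => 2 * (y - 1/2) ^ 2) (2 * (2 * (x - 1/2))) x := by
    have := (((hasDerivAt_id x).sub_const (1/2)).pow 2).const_mul 2
    simpa using this
  have h6 := ((h1.add h4).add_const (Real.log 2)).sub h5
  exact h6.congr_deriv (by simp only [gEnt]; rw [mul_neg, mul_one_div_cancel hne]; ring)

private lemma entropy_ge (u : ℝ) (hu0 : 0 < u) (hu1 : u < 1) :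
    2 * (u - 1/2) ^ 2 ≤ u * Real.log u + (1 - u) * Real.log (1 - u) + Real.log 2 := by
  have hgmono : MonotoneOn gEnt (Ioo (0:ℝ) 1) := by
    refine monotoneOn_of_deriv_nonneg (convex_Ioo 0 1) ?_ ?_ ?_
    · intro x hx
      exact (hasDerivAt_gEnt hx.1 hx.2).continuousAt.continuousWithinAt
    · intro x hx
      rw [interior_Ioo] at hx
      exact (hasDerivAt_gEnt hx.1 hx.2).differentiableAt.differentiableWithinAt
    · intro x hx
      rw [interior_Ioo] at hx
      rw [(hasDerivAt_gEnt hx.1 hx.2).deriv]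
      have hx0 := hx.1; have hx1 := hx.2
      have hprod : 0 < x * (1 - x) := by nlinarith
      rw [div_add_div _ _ (ne_of_gt hx0) (by linarith : (1:ℝ) - x ≠ 0)]
      rw [sub_nonneg, le_div_iff₀ hprod]
      nlinarith [sq_nonneg (2*x - 1)]
  have hghalf : gEnt (1/2) = 0 := by
    simp only [gEnt]
    rw [show (1:ℝ) - 1/2 = 1/2 by norm_num, one_div, Real.log_inv]
    ring
  have hf12 : fEnt (1/2) = 0 := by
    simp only [fEnt]
    rw [show (1:ℝ) - 1/2 = 1/2 by norm_num, one_div, Real.log_inv]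
    ring
  have key : 0 ≤ fEnt u := by
    rcases le_or_gt u (1/2) with hc | hc
    · have hsub : Icc u (1/2 : ℝ) ⊆ Ioo (0:ℝ) 1 := by
        intro x hx
        exact ⟨lt_of_lt_of_le hu0 hx.1, lt_of_le_of_lt hx.2 (by norm_num)⟩
      have hanti : AntitoneOn fEnt (Icc u (1/2)) := by
        refine antitoneOn_of_deriv_nonpos (convex_Icc _ _) ?_ ?_ ?_
        · intro x hx
          have hx' := hsub hx
          exact (hasDerivAt_fEnt hx'.1 hx'.2).continuousAt.continuousWithinAt
        · intro x hx
          rw [interior_Icc] at hx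
          have hx' := hsub (Ioo_subset_Icc_self hx)
          exact (hasDerivAt_fEnt hx'.1 hx'.2).differentiableAt.differentiableWithinAt
        · intro x hx
          rw [interior_Icc] at hx
          have hx' := hsub (Ioo_subset_Icc_self hx)
          rw [(hasDerivAt_fEnt hx'.1 hx'.2).deriv]
          have := hgmono hx' ⟨by norm_num, by norm_num⟩ (le_of_lt hx.2)
          rw [hghalf] at this
          exact this
      have := hanti ⟨le_refl u, hc⟩ ⟨hc, le_refl _⟩ hc
      rw [hf12] at this
      exact this
    · have hsub : Icc (1/2 : ℝ) u ⊆ Ioo (0:ℝ) 1 := by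
        intro x hx
        exact ⟨lt_of_lt_of_le (by norm_num) hx.1, lt_of_le_of_lt hx.2 hu1⟩
      have hmono : MonotoneOn fEnt (Icc (1/2) u) := by
        refine monotoneOn_of_deriv_nonneg (convex_Icc _ _) ?_ ?_ ?_
        · intro x hx
          have hx' := hsub hx
          exact (hasDerivAt_fEnt hx'.1 hx'.2).continuousAt.continuousWithinAt
        · intro x hx
          rw [interior_Icc] at hx
          have hx' := hsub (Ioo_subset_Icc_self hx)
          exact (hasDerivAt_fEnt hx'.1 hx'.2).differentiableAt.differentiableWithinAt
        · intro x hx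
          rw [interior_Icc] at hx
          have hx' := hsub (Ioo_subset_Icc_self hx)
          rw [(hasDerivAt_fEnt hx'.1 hx'.2).deriv]
          have := hgmono ⟨by norm_num, by norm_num⟩ hx' (le_of_lt hx.1)
          rw [hghalf] at this
          exact this
      have := hmono ⟨le_refl _, le_of_lt hc⟩ ⟨le_of_lt hc, le_refl u⟩ (le_of_lt hc)
      rw [hf12] at this
      exact this
  simp only [fEnt] at key
  linarith

/-- Bound (3.56) on `Υ_{n,p}(u) = γ² − I(u) − γ²·(1 + |1−2u|^p)⁻¹`, where
`I(u) = u·log u + (1−u)·log(1−u) + log 2` is the Cramér entropy for fair coin tossing: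
for `p ≥ 2`, `γ ∈ (0, 1/2]` and `u ∈ (0,1)` one has `Υ ≤ −(u − 1/2)²`. -/
theorem upsilon_bound (p γ u : ℝ) (hp : 2 ≤ p) (hγ0 : 0 < γ) (hγ : γ ≤ 1 / 2)
    (hu0 : 0 < u) (hu1 : u < 1) :
    γ ^ 2 - (u * Real.log u + (1 - u) * Real.log (1 - u) + Real.log 2)
        - γ ^ 2 / (1 + |1 - 2 * u| ^ p)
      ≤ -(u - 1 / 2) ^ 2 := by
  set t := |1 - 2 * u| with ht
  have ht0 : 0 ≤ t := abs_nonneg _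
  have ht1 : t ≤ 1 := by
    rw [ht, abs_le]; constructor <;> linarith
  have hT0 : (0:ℝ) ≤ t ^ p := Real.rpow_nonneg ht0 p
  have hT1 : (0:ℝ) < 1 + t ^ p := by linarith
  have htp : t ^ p ≤ (1 - 2*u)^2 := by
    rcases eq_or_lt_of_le ht0 with h0 | h0
    · rw [← h0, Real.zero_rpow (by linarith : p ≠ 0)]
      positivity
    · have h := Real.rpow_le_rpow_of_exponent_ge h0 ht1 hp
      have h2 : t ^ (2:ℝ) = t ^ (2:ℕ) := by
        rw [← Real.rpow_natCast t 2]; norm_num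
      rw [h2] at h
      calc t ^ p ≤ t ^ 2 := h
        _ = (1 - 2*u)^2 := by rw [ht, sq_abs]
  have hdiv : γ ^ 2 - γ ^ 2 * t ^ p ≤ γ ^ 2 / (1 + t ^ p) := by
    rw [le_div_iff₀ hT1]
    nlinarith [mul_nonneg (sq_nonneg γ) (mul_nonneg hT0 hT0)]
  have hγ2 : γ ^ 2 ≤ 1/4 := by nlinarith
  have hbound : γ ^ 2 - γ ^ 2 / (1 + t ^ p) ≤ (u - 1/2)^2 := by
    have h1 : γ ^ 2 * t ^ p ≤ (1/4) * (1 - 2*u)^2 :=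
      mul_le_mul hγ2 htp hT0 (by norm_num)
    have h2 : (1/4 : ℝ) * (1 - 2*u)^2 = (u - 1/2)^2 := by ring
    linarith
  have hent := entropy_ge u hu0 hu1
  linarith
end
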